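/- arXiv:2008.09962 — 12 statements merged into one kernel-verified Lean document; each statement's English description precedes it below -/
import Mathlib

section
/- Let q be a prime power, d a positive divisor of q−1, and ℓ ≥ 0 an integer. Suppose f(x) = x^{(q−1)/d − ℓ} + g(x) ∈ F_q[x] with 1 ≤ deg(g) < (q−1)/d − ℓ. Then the number of distinct roots of f in F_q^* is at most d(ℓ + deg(g)). -/
open Polynomial

/-!
For a root `x ≠ 0` of `f`, put `n = (q - 1) / d`. Then `c = x ^ n` is a `d`-th root of unity, and
multiplying `f(x) = 0` by `x ^ ℓ` shows that `x` is a root of `c + X ^ ℓ * g`, a nonzero polynomial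
of degree `ℓ + deg g`. There are at most `d` choices of `c`, each contributing at most
`ℓ + deg g` roots.
-/

namespace Polynomial

section Roots

variable {R : Type*} [CommRing R] [IsDomain R]

theorem card_le_card_mul_of_forall_exists_isRoot {ι : Type*} [DecidableEq R]
    {A : Finset R} {T : Finset ι} (p : ι → R[X]) {D : ℕ}
    (hp : ∀ c ∈ T, p c ≠ 0) (hdeg : ∀ c ∈ T, (p c).natDegree ≤ D)
    (hA : ∀ x ∈ A, ∃ c ∈ T, (p c).IsRoot x) : A.card ≤ T.card * D := by
  have hsub : A ⊆ T.biUnion fun c => (p c).roots.toFinset := by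
    intro x hx
    obtain ⟨c, hc, hroot⟩ := hA x hx
    exact Finset.mem_biUnion.mpr ⟨c, hc, Multiset.mem_toFinset.mpr ((mem_roots (hp c hc)).mpr hroot)⟩
  refine (Finset.card_le_card hsub).trans (Finset.card_biUnion_le_card_mul _ _ _ fun c hc => ?_)
  exact (Multiset.toFinset_card_le _).trans ((card_roots' _).trans (hdeg c hc))

theorem card_nthRootsFinset_le (n : ℕ) (a : R) : (nthRootsFinset n a).card ≤ n := by
  classical
  rw [nthRootsFinset_def]
  exact (Multiset.toFinset_card_le _).trans (card_nthRoots n a)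

end Roots

theorem eval_C_pow_add_X_pow_mul {R : Type*} [CommSemiring R] (g : R[X]) (x : R) (m ℓ : ℕ) :
    (C (x ^ (m + ℓ)) + X ^ ℓ * g).eval x = x ^ ℓ * (X ^ m + g).eval x := by
  simp only [eval_add, eval_C, eval_mul, eval_pow, eval_X]
  ring

end Polynomial

theorem FiniteField.pow_card_sub_one_div_mem_nthRootsFinset {F : Type*} [Field F] [Fintype F]
    {d : ℕ} (hd0 : 0 < d) (hd : d ∣ Fintype.card F - 1) {x : F} (hx : x ≠ 0) :
    x ^ ((Fintype.card F - 1) / d) ∈ nthRootsFinset d (1 : F) := by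
  rw [mem_nthRootsFinset hd0, ← pow_mul, Nat.div_mul_cancel hd]
  exact FiniteField.pow_card_sub_one_eq_one x hx

theorem stmt_1_general {F : Type*} [Field F] [Fintype F] [DecidableEq F]
    (d ℓ : ℕ) (hd : d ∣ Fintype.card F - 1)
    (g f : F[X])
    (hg1 : 1 ≤ g.natDegree) (hgdeg : g.natDegree < (Fintype.card F - 1) / d - ℓ)
    (hf : f = X ^ ((Fintype.card F - 1) / d - ℓ) + g) :
    (Finset.univ.filter (fun x : F => x ≠ 0 ∧ f.eval x = 0)).card
      ≤ d * (ℓ + g.natDegree) := by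
  set n := (Fintype.card F - 1) / d
  have hd0 : 0 < d := Nat.pos_of_ne_zero (by rintro rfl; simp [n] at hgdeg)
  have hg : g ≠ 0 := by rintro rfl; simp at hg1
  have hdeg (c : F) : (C c + X ^ ℓ * g).natDegree = ℓ + g.natDegree := by
    rw [natDegree_C_add, natDegree_X_pow_mul (n := ℓ) hg, add_comm]
  refine (card_le_card_mul_of_forall_exists_isRoot (fun c => C c + X ^ ℓ * g)
    (fun c _ => ne_zero_of_natDegree_gt (n := 0) (by rw [hdeg]; omega)) (fun c _ => (hdeg c).le)
    fun x hx => ?_).trans (Nat.mul_le_mul_right _ (card_nthRootsFinset_le d 1))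
  obtain ⟨hx0, hfx⟩ := (Finset.mem_filter.mp hx).2
  refine ⟨x ^ n, FiniteField.pow_card_sub_one_div_mem_nthRootsFinset hd0 hd hx0, ?_⟩
  rw [IsRoot, show n = n - ℓ + ℓ by omega, eval_C_pow_add_X_pow_mul, ← hf, hfx, mul_zero]

theorem stmt_1 {F : Type*} [Field F] [Fintype F] [DecidableEq F]
    (d ℓ : ℕ) (hd0 : 0 < d) (hd : d ∣ Fintype.card F - 1)
    (g f : F[X])
    (hg1 : 1 ≤ g.natDegree) (hgdeg : g.natDegree < (Fintype.card F - 1) / d - ℓ)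
    (hf : f = X ^ ((Fintype.card F - 1) / d - ℓ) + g) :
    (Finset.univ.filter (fun x : F => x ≠ 0 ∧ f.eval x = 0)).card
      ≤ d * (ℓ + g.natDegree) :=
  stmt_1_general d ℓ hd g f hg1 hgdeg hf
end

section
/- Let q be a prime power, d a positive divisor of q−1, and ℓ ≥ 0 an integer. Suppose f(x) = x^{(q−1)/d − ℓ} + g(x) ∈ F_q[x] with 1 ≤ deg(g) < (q−1)/d − ℓ. Then the number of distinct roots of f in F_q^* is at most √((q−1)(ℓ + deg(g))). -/
open Polynomial

theorem stmt_2 {F : Type*} [Field F] [Fintype F] [DecidableEq F]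
    (d ℓ : ℕ) (hd0 : 0 < d) (hd : d ∣ Fintype.card F - 1)
    (g f : F[X])
    (hg1 : 1 ≤ g.natDegree) (hgdeg : g.natDegree < (Fintype.card F - 1) / d - ℓ)
    (hf : f = X ^ ((Fintype.card F - 1) / d - ℓ) + g) :
    ((Finset.univ.filter (fun x : F => x ≠ 0 ∧ f.eval x = 0)).card : ℝ)
      ≤ Real.sqrt ((Fintype.card F - 1) * (ℓ + g.natDegree)) := by
  classical
  set q := Fintype.card F with hq
  set m := (q - 1) / d - ℓ with hm
  set k := g.natDegree with hk
  have hq1 : 1 ≤ q := Fintype.card_pos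
  have hm2 : 2 ≤ m := by omega
  have hg0 : g ≠ 0 := fun h => by simp [hk, h] at hg1
  -- ℓ < (q-1)/d
  have hl : ℓ < (q - 1) / d := by omega
  have hmd : (ℓ + m) * d = q - 1 := by
    have : ℓ + m = (q - 1) / d := by omega
    rw [this, Nat.div_mul_cancel hd]
  -- f ≠ 0 and natDegree f = m
  have hfcoeff : f.coeff m = 1 := by
    rw [hf]
    have : g.coeff m = 0 := coeff_eq_zero_of_natDegree_lt (by omega)
    simp [coeff_X_pow, this]
  have hf0 : f ≠ 0 := by
    intro h; rw [h] at hfcoeff; simp at hfcoeff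
  have hfdeg : f.natDegree ≤ m := by
    rw [hf]
    refine le_trans (natDegree_add_le _ _) ?_
    simp only [natDegree_X_pow]
    exact max_le le_rfl (le_of_lt hgdeg)
  set S := Finset.univ.filter (fun x : F => x ≠ 0 ∧ f.eval x = 0) with hS
  -- Bound 1 : S.card ≤ m
  have hb1 : S.card ≤ m := by
    have hsub : S ⊆ f.roots.toFinset := by
      intro x hx
      simp only [hS, Finset.mem_filter] at hx
      rw [Multiset.mem_toFinset, mem_roots hf0]
      exact hx.2.2
    calc S.card ≤ f.roots.toFinset.card := Finset.card_le_card hsub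
      _ ≤ Multiset.card f.roots := f.roots.toFinset_card_le
      _ ≤ f.natDegree := f.card_roots'
      _ ≤ m := hfdeg
  -- Bound 2 : S.card ≤ ℓ*d + d*k via auxiliary polynomial
  set h : F[X] := X ^ (ℓ * d) * g ^ d - C ((-1 : F) ^ d) with hh
  have hXg0 : (X : F[X]) ^ (ℓ * d) * g ^ d ≠ 0 := by
    apply mul_ne_zero (pow_ne_zero _ X_ne_zero) (pow_ne_zero _ hg0)
  have hXgdeg : ((X : F[X]) ^ (ℓ * d) * g ^ d).natDegree = ℓ * d + d * k := by
    rw [natDegree_mul (pow_ne_zero _ X_ne_zero) (pow_ne_zero _ hg0),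
      natDegree_X_pow, natDegree_pow, mul_comm d k]
  have hhdeg : h.natDegree ≤ ℓ * d + d * k := by
    rw [hh]
    refine le_trans (natDegree_sub_le _ _) ?_
    simp [hXgdeg]
  have hh0 : h ≠ 0 := by
    have hdpos : 0 < ℓ * d + d * k := by positivity
    have : h.coeff (ℓ * d + d * k) ≠ 0 := by
      rw [hh, coeff_sub, coeff_C, if_neg (by omega), sub_zero, ← hXgdeg,
        ← leadingCoeff]
      exact leadingCoeff_ne_zero.mpr hXg0
    intro hc; rw [hc] at this; simp at this
  have hb2 : S.card ≤ ℓ * d + d * k := by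
    have hsub : S ⊆ h.roots.toFinset := by
      intro x hx
      simp only [hS, Finset.mem_filter] at hx
      obtain ⟨-, hx0, hxf⟩ := hx
      rw [Multiset.mem_toFinset, mem_roots hh0]
      have hgx : g.eval x = -x ^ m := by
        rw [hf] at hxf
        simp only [eval_add, eval_pow, eval_X] at hxf
        linear_combination hxf
      have hx1 : x ^ (q - 1) = 1 := FiniteField.pow_card_sub_one_eq_one x hx0
      simp only [hh, IsRoot, eval_sub, eval_mul, eval_pow, eval_X, eval_C, hgx]
      rw [neg_pow, ← pow_mul, ← mul_assoc, mul_comm (x ^ (ℓ * d)), mul_assoc,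
        ← pow_add, ← add_mul, hmd, hx1, mul_one, sub_self]
    calc S.card ≤ h.roots.toFinset.card := Finset.card_le_card hsub
      _ ≤ Multiset.card h.roots := h.roots.toFinset_card_le
      _ ≤ h.natDegree := h.card_roots'
      _ ≤ ℓ * d + d * k := hhdeg
  -- combine
  have hnat : S.card ^ 2 ≤ (q - 1) * (ℓ + k) := by
    calc S.card ^ 2 = S.card * S.card := sq S.card
      _ ≤ m * (ℓ * d + d * k) := Nat.mul_le_mul hb1 hb2
      _ = (m * d) * (ℓ + k) := by ring
      _ ≤ (q - 1) * (ℓ + k) :=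
          Nat.mul_le_mul_right _ (hmd ▸ Nat.mul_le_mul_right d (Nat.le_add_left m ℓ))
  have hq1' : (1 : ℝ) ≤ (q : ℝ) := by exact_mod_cast hq1
  rw [Real.le_sqrt (Nat.cast_nonneg _) (mul_nonneg (by linarith) (by positivity))]
  have : ((S.card ^ 2 : ℕ) : ℝ) ≤ (((q - 1) * (ℓ + k) : ℕ) : ℝ) := Nat.cast_le.mpr hnat
  push_cast [Nat.cast_sub hq1] at this ⊢
  linarith
end

section
/- Let q be a prime power, d a positive divisor of q−1, and m ≥ 0 an integer. Suppose f(x) = x^{(q−1)/d + m} + g(x) ∈ F_q[x] where 1 ≤ deg(g) < (q−1)/d + m and g has nonzero constant term. Then the number of distinct roots of f in F_q^* is at most d·max{m, deg(g)}. -/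
open Polynomial

theorem stmt_3 {F : Type*} [Field F] [Fintype F] [DecidableEq F]
    (d m : ℕ) (hd0 : 0 < d) (hd : d ∣ Fintype.card F - 1)
    (g f : F[X])
    (hg1 : 1 ≤ g.natDegree) (hgdeg : g.natDegree < (Fintype.card F - 1) / d + m)
    (hg0 : g.coeff 0 ≠ 0)
    (hf : f = X ^ ((Fintype.card F - 1) / d + m) + g) :
    (Finset.univ.filter (fun x : F => x ≠ 0 ∧ f.eval x = 0)).card
      ≤ d * max m g.natDegree := by
  subst hf
  set q1 := Fintype.card F - 1 with hq1
  set M := max m g.natDegree with hM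
  set s := Finset.univ.filter (fun x : F => x ≠ 0 ∧ (X ^ (q1 / d + m) + g).eval x = 0)
    with hs
  have key : s.card ≤ M * (s.image (fun x => x ^ (q1 / d))).card := by
    apply Finset.card_le_mul_card_image
    intro a ha
    set h : F[X] := C a * X ^ m + g with hh
    have hne : h ≠ 0 := by
      rcases Nat.eq_zero_or_pos m with hm | hm
      · intro h0
        have : h.coeff g.natDegree = 0 := by rw [h0]; simp
        rw [hh] at this
        simp only [hm, pow_zero, mul_one, coeff_add] at this
        rw [coeff_C, if_neg (by omega)] at this
        simp only [zero_add] at this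
        exact (Polynomial.leadingCoeff_ne_zero.mpr
          (fun h0 => by simp [h0] at hg1)) this
      · intro h0
        have : h.coeff 0 = 0 := by rw [h0]; simp
        rw [hh] at this
        simp only [coeff_add, coeff_C_mul, coeff_X_pow, if_neg (by omega : ¬ 0 = m)] at this
        simp only [mul_zero, zero_add] at this
        exact hg0 this
    have hdeg : h.natDegree ≤ M := by
      apply le_trans (Polynomial.natDegree_add_le _ _)
      apply max_le
      · exact le_trans (Polynomial.natDegree_C_mul_le _ _)
          (le_trans (Polynomial.natDegree_X_pow_le m) (le_max_left _ _))
      · exact le_max_right _ _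
    have hsub : (s.filter fun x => x ^ (q1 / d) = a) ⊆ h.roots.toFinset := by
      intro x hx
      simp only [Finset.mem_filter, hs, Finset.mem_univ, true_and] at hx
      obtain ⟨⟨hx0, hfx⟩, hxa⟩ := hx
      rw [Multiset.mem_toFinset, mem_roots hne]
      rw [IsRoot, hh]
      simp only [eval_add, eval_mul, eval_C, eval_pow, eval_X]
      simp only [eval_add, eval_mul, eval_pow, eval_X, pow_add] at hfx
      rw [hxa] at hfx
      exact hfx
    calc (s.filter fun x => x ^ (q1 / d) = a).card
        ≤ h.roots.toFinset.card := Finset.card_le_card hsub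
      _ ≤ Multiset.card h.roots := h.roots.toFinset_card_le
      _ ≤ h.natDegree := Polynomial.card_roots' h
      _ ≤ M := hdeg
  have himg : (s.image (fun x => x ^ (q1 / d))).card ≤ d := by
    have hsub : (s.image (fun x => x ^ (q1 / d))) ⊆ (nthRoots d (1 : F)).toFinset := by
      intro a ha
      simp only [Finset.mem_image] at ha
      obtain ⟨x, hx, rfl⟩ := ha
      simp only [Finset.mem_filter, hs, Finset.mem_univ, true_and] at hx
      rw [Multiset.mem_toFinset, mem_nthRoots hd0, ← pow_mul,
        Nat.div_mul_cancel hd]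
      exact FiniteField.pow_card_sub_one_eq_one x hx.1
    calc (s.image (fun x => x ^ (q1 / d))).card
        ≤ (nthRoots d (1 : F)).toFinset.card := Finset.card_le_card hsub
      _ ≤ Multiset.card (nthRoots d (1 : F)) := Multiset.toFinset_card_le _
      _ ≤ d := Polynomial.card_nthRoots d 1
  calc s.card ≤ M * (s.image (fun x => x ^ (q1 / d))).card := key
    _ ≤ M * d := Nat.mul_le_mul_left M himg
    _ = d * M := Nat.mul_comm _ _
end

section
/- Let q be a prime power, d a positive divisor of q−1, and ℓ ≥ 0 an integer. Suppose f(x) = x^{(q−1)/d − ℓ} + g(x) ∈ F_q[x] with 1 ≤ deg(g) < (q−1)/d − ℓ. If d(d+1)ℓ + d²·deg(g) < q−1, then the number of distinct roots of f in F_q^* is strictly less than deg(f) = (q−1)/d − ℓ. -/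
open Polynomial

theorem stmt_4 {F : Type*} [Field F] [Fintype F] [DecidableEq F]
    (d ℓ : ℕ) (hd0 : 0 < d) (hd : d ∣ Fintype.card F - 1)
    (g f : F[X])
    (hg1 : 1 ≤ g.natDegree) (hgdeg : g.natDegree < (Fintype.card F - 1) / d - ℓ)
    (hf : f = X ^ ((Fintype.card F - 1) / d - ℓ) + g)
    (h1 : d * (d + 1) * ℓ + d ^ 2 * g.natDegree < Fintype.card F - 1) :
    (Finset.univ.filter (fun x : F => x ≠ 0 ∧ f.eval x = 0)).card
      < (Fintype.card F - 1) / d - ℓ := by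
  set n := Fintype.card F - 1 with hn
  set m := n / d - ℓ with hm
  have hg0 : g ≠ 0 := fun h => by simp [h] at hg1
  have hdegg : g.degree < (X ^ m : F[X]).degree := by
    rw [degree_X_pow]
    exact (natDegree_lt_iff_degree_lt hg0).1 hgdeg
  have hmonic : f.Monic := by
    rw [hf]; exact (monic_X_pow m).add_of_left hdegg
  have hfdeg : f.natDegree = m := by
    rw [hf, natDegree_add_eq_left_of_degree_lt (by rwa [degree_X_pow] at hdegg ⊢), natDegree_X_pow]
  have hf0 : f ≠ 0 := hmonic.ne_zero
  set S := Finset.univ.filter (fun x : F => x ≠ 0 ∧ f.eval x = 0) with hS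
  -- S.val ≤ f.roots
  have hSle : S.val ≤ f.roots := by
    rw [Multiset.le_iff_subset S.nodup]
    intro x hx
    rw [mem_roots hf0]
    exact (Finset.mem_filter.1 hx).2.2
  have hcardle : S.card ≤ m := by
    calc S.card = Multiset.card S.val := rfl
    _ ≤ Multiset.card f.roots := Multiset.card_le_card hSle
    _ ≤ f.natDegree := f.card_roots'
    _ = m := hfdeg
  rcases lt_or_eq_of_le hcardle with h | hcard
  · exact h
  exfalso
  -- f = ∏ (X - C x) over S
  have hpdvd : (S.val.map fun a => X - C a).prod ∣ f :=
    (Multiset.prod_X_sub_C_dvd_iff_le_roots hf0 _).2 hSle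
  have hpmonic : ((S.val.map fun a => X - C a).prod).Monic :=
    monic_multiset_prod_of_monic _ _ fun a _ => monic_X_sub_C a
  have hpdeg : ((S.val.map fun a => X - C a).prod).natDegree = m := by
    rw [natDegree_multiset_prod_of_monic _ fun a ha => by
      obtain ⟨b, -, rfl⟩ := Multiset.mem_map.1 ha; exact monic_X_sub_C b]
    simp only [Multiset.map_map, Function.comp, natDegree_X_sub_C]
    simp [hcard]
  have hfeq : f = (S.val.map fun a => X - C a).prod := by
    obtain ⟨c, hc⟩ := hpdvd
    have hcmonic : c.Monic := by
      have := hmonic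
      rw [hc] at this
      exact (hpmonic.of_mul_monic_left this)
    have hcdeg : c.natDegree = 0 := by
      have := hfdeg
      rw [hc, natDegree_mul hpmonic.ne_zero hcmonic.ne_zero, hpdeg] at this
      omega
    rw [hc, hcmonic.natDegree_eq_zero.1 hcdeg, mul_one]
  -- f ∣ X^n - 1
  have hXn : f ∣ (X : F[X]) ^ n - 1 := by
    rw [hfeq]
    refine (Multiset.prod_X_sub_C_dvd_iff_le_roots ?_ _).2 ?_
    · intro h
      have h2 : ((X : F[X]) ^ n - 1).natDegree = n := by
        have : ((X : F[X]) ^ n - 1) = X ^ n - C 1 := by simp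
        rw [this, natDegree_sub_C, natDegree_X_pow]
      have hn1 : 0 < n := by omega
      rw [h] at h2; simp at h2; omega
    · rw [Multiset.le_iff_subset S.nodup]
      intro x hx
      obtain ⟨hx0, -⟩ := (Finset.mem_filter.1 hx).2
      rw [mem_roots (by
        intro h
        have h2 : ((X : F[X]) ^ n - 1).natDegree = n := by
          have : ((X : F[X]) ^ n - 1) = X ^ n - C 1 := by simp
          rw [this, natDegree_sub_C, natDegree_X_pow]
        have hn1 : 0 < n := by omega
        rw [h] at h2; simp at h2; omega)]
      simp [IsRoot, FiniteField.pow_card_sub_one_eq_one x hx0, hn]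
  -- arithmetic facts
  have hdn : d * (n / d) = n := Nat.mul_div_cancel' hd
  have hl : ℓ ≤ n / d := by omega
  have hk : m + ℓ = n / d := by omega
  have hnsplit : n = m * d + d * ℓ := by
    have h2 : d * (m + ℓ) = n := by rw [hk, hdn]
    calc n = d * (m + ℓ) := h2.symm
    _ = m * d + d * ℓ := by ring
  -- X^n = (X^m)^d * X^(d*ℓ)
  have hXpow : (X : F[X]) ^ n = (X ^ m) ^ d * X ^ (d * ℓ) := by
    rw [← pow_mul, ← pow_add, ← hnsplit]
  have hXm : (X : F[X]) ^ m = f - g := by rw [hf]; ring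
  have hdvd2 : f ∣ (f - g) ^ d - (-g) ^ d := by
    have : f = (f - g) - (-g) := by ring
    calc f = (f - g) - (-g) := this
    _ ∣ (f - g) ^ d - (-g) ^ d := sub_dvd_pow_sub_pow _ _ d
  have hdvd3 : f ∣ (-g) ^ d * X ^ (d * ℓ) - 1 := by
    have key : (-g) ^ d * X ^ (d * ℓ) - 1 =
        ((X : F[X]) ^ n - 1) - ((f - g) ^ d - (-g) ^ d) * X ^ (d * ℓ) := by
      rw [hXpow, hXm]; ring
    rw [key]
    exact dvd_sub hXn (hdvd2.mul_right _)
  -- degree contradiction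
  have hhne : ((-g) ^ d * X ^ (d * ℓ) : F[X]) ≠ 0 := by
    apply mul_ne_zero (pow_ne_zero _ (neg_ne_zero.2 hg0)) (pow_ne_zero _ X_ne_zero)
  have hhdeg : ((-g) ^ d * X ^ (d * ℓ) - 1 : F[X]).natDegree = d * g.natDegree + d * ℓ := by
    have : ((-g) ^ d * X ^ (d * ℓ) - 1 : F[X]) = (-g) ^ d * X ^ (d * ℓ) - C 1 := by simp
    rw [this, natDegree_sub_C, natDegree_mul (pow_ne_zero _ (neg_ne_zero.2 hg0))
      (pow_ne_zero _ X_ne_zero), natDegree_pow, natDegree_neg, natDegree_X_pow]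
  have hlt : d * g.natDegree + d * ℓ < m := by
    have e1 : d * (d * g.natDegree + d * ℓ) + d * ℓ = d * (d + 1) * ℓ + d ^ 2 * g.natDegree := by
      ring
    have e2 : d * m + d * ℓ = n := by
      calc d * m + d * ℓ = m * d + d * ℓ := by ring
      _ = n := hnsplit.symm
    have e3 : d * (d * g.natDegree + d * ℓ) < d * m := by linarith
    exact Nat.lt_of_mul_lt_mul_left e3
  have hne : ((-g) ^ d * X ^ (d * ℓ) - 1 : F[X]) ≠ 0 := by
    intro h
    rw [h] at hhdeg
    simp only [natDegree_zero] at hhdeg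
    have h3 : 0 < d * g.natDegree := Nat.mul_pos hd0 hg1
    omega
  have := natDegree_le_of_dvd hdvd3 hne
  rw [hfdeg, hhdeg] at this
  omega
end

section
/- Let q be a prime power, d a positive divisor of q−1, and ℓ ≥ 0 an integer. Suppose f(x) = x^{(q−1)/d − ℓ} + g(x) ∈ F_q[x] with 1 ≤ deg(g) < (q−1)/d − ℓ and g has nonzero constant term. If d²(ℓ + deg(g)) > q−1, dℓ + d³·deg(g) < q−1, and d(d²+1)ℓ + d³·deg(g) < (q−1)(d+1), then the number of distinct roots of f in F_q^* is strictly less than deg(f) = (q−1)/d − ℓ. -/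
open Polynomial

theorem stmt_6 {F : Type*} [Field F] [Fintype F] [DecidableEq F]
    (d ℓ : ℕ) (hd0 : 0 < d) (hd : d ∣ Fintype.card F - 1)
    (g f : F[X])
    (hg1 : 1 ≤ g.natDegree) (hgdeg : g.natDegree < (Fintype.card F - 1) / d - ℓ)
    (hg0 : g.coeff 0 ≠ 0)
    (hf : f = X ^ ((Fintype.card F - 1) / d - ℓ) + g)
    (h1 : d ^ 2 * (ℓ + g.natDegree) > Fintype.card F - 1)
    (h2 : d * ℓ + d ^ 3 * g.natDegree < Fintype.card F - 1)
    (h3 : d * (d ^ 2 + 1) * ℓ + d ^ 3 * g.natDegree < (Fintype.card F - 1) * (d + 1)) :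
    (Finset.univ.filter (fun x : F => x ≠ 0 ∧ f.eval x = 0)).card
      < (Fintype.card F - 1) / d - ℓ := by
  classical
  set n := Fintype.card F - 1 with hn
  set m := g.natDegree with hm
  set e := n / d - ℓ with he
  by_contra hcon
  push_neg at hcon
  -- basic numeric facts
  have hg_ne : g ≠ 0 := fun h => hg0 (by simp [h])
  have hme : m < e := hgdeg
  have he2 : 2 ≤ e := by omega
  have hk : d * (n / d) = n := Nat.mul_div_cancel' hd
  have hkel : n / d = e + ℓ := by omega
  have hnde : n = d * e + d * ℓ := by rw [← hk, hkel]; ring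
  have hn1 : 1 ≤ n := by
    have : 1 < Fintype.card F := Fintype.one_lt_card
    omega
  -- f is monic of degree e
  have hgdeglt : g.degree < ((e : ℕ) : WithBot ℕ) :=
    lt_of_le_of_lt degree_le_natDegree (by exact_mod_cast hme)
  have hfd : f.degree = (e : ℕ) := by
    rw [hf, degree_add_eq_left_of_degree_lt, degree_X_pow]
    rwa [degree_X_pow]
  have hfnd : f.natDegree = e := natDegree_eq_of_degree_eq_some hfd
  have hfm : f.Monic := by
    have : f.coeff e = 1 := by
      rw [hf]
      simp [coeff_X_pow, coeff_eq_zero_of_natDegree_lt hme]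
    rwa [Monic, leadingCoeff, hfnd]
  have hf0 : f ≠ 0 := hfm.ne_zero
  -- the set of roots
  set S := Finset.univ.filter (fun x : F => x ≠ 0 ∧ f.eval x = 0) with hS
  set P := (S.val.map fun a => X - C a).prod with hP
  have hSle : S.val ≤ f.roots := by
    refine (Multiset.le_iff_subset S.nodup).mpr ?_
    intro x hx
    rw [Finset.mem_val, hS, Finset.mem_filter] at hx
    rw [mem_roots hf0]
    exact hx.2.2
  have hPf : P ∣ f := (Multiset.prod_X_sub_C_dvd_iff_le_roots hf0 S.val).mpr hSle
  have hPdeg : P.natDegree = S.card := by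
    rw [hP, natDegree_multiset_prod_X_sub_C_eq_card]; rfl
  have hPm : P.Monic :=
    monic_multiset_prod_of_monic _ _ (fun a _ => monic_X_sub_C a)
  have hcard : S.card = e :=
    le_antisymm (by rw [← hPdeg, ← hfnd]; exact natDegree_le_of_dvd hPf hf0) hcon
  -- f = P
  obtain ⟨t, ht⟩ := hPf
  have htne : t ≠ 0 := by
    rintro rfl
    rw [mul_zero] at ht
    exact hf0 ht
  have htdeg : t.natDegree = 0 := by
    have := hPm.natDegree_mul' htne
    rw [← ht, hfnd, hPdeg, hcard] at this
    omega
  have htm : t.Monic := by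
    have hlc : f.leadingCoeff = P.leadingCoeff * t.leadingCoeff := by
      rw [ht, leadingCoeff_mul]
    rw [hfm.leadingCoeff, hPm.leadingCoeff, one_mul] at hlc
    exact hlc.symm
  have hfP : f = P := by
    rw [ht, (htm.natDegree_eq_zero).mp htdeg, mul_one]
  -- f divides X^n - 1
  have hXn0 : ((X : F[X]) ^ n - 1) ≠ 0 := by
    simpa using X_pow_sub_C_ne_zero (by omega : 0 < n) (1 : F)
  have hfdvd : f ∣ (X : F[X]) ^ n - 1 := by
    rw [hfP]
    refine (Multiset.prod_X_sub_C_dvd_iff_le_roots hXn0 S.val).mpr ?_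
    refine (Multiset.le_iff_subset S.nodup).mpr ?_
    intro x hx
    rw [Finset.mem_val, hS, Finset.mem_filter] at hx
    rw [mem_roots hXn0]
    have hx0 : x ≠ 0 := hx.2.1
    have : x ^ n = 1 := FiniteField.pow_card_sub_one_eq_one x hx0
    simp [IsRoot, this]
  -- key divisibility: f ∣ X^(d^2*e) - (-g)^(d^2)
  have hkey1 : f ∣ (X : F[X]) ^ (d ^ 2 * e) - (-g) ^ d ^ 2 := by
    have h := sub_dvd_pow_sub_pow ((X : F[X]) ^ e) (-g) (d ^ 2)
    have hfe : (X : F[X]) ^ e - (-g) = f := by rw [hf]; ring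
    have hpp : ((X : F[X]) ^ e) ^ d ^ 2 = (X : F[X]) ^ (d ^ 2 * e) := by
      rw [← pow_mul, mul_comm]
    rwa [hfe, hpp] at h
  -- f ∣ X^b - X^a whenever a + n*c = b
  have hdvd_xx : ∀ a b c : ℕ, a + n * c = b → f ∣ (X : F[X]) ^ b - X ^ a := by
    intro a b c habc
    have h1' : f ∣ (X : F[X]) ^ (n * c) - 1 := by
      have h := sub_dvd_pow_sub_pow ((X : F[X]) ^ n) 1 c
      rw [← pow_mul, one_pow] at h
      exact hfdvd.trans h
    have hb : (X : F[X]) ^ b - X ^ a = X ^ a * ((X : F[X]) ^ (n * c) - 1) := by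
      rw [← habc, pow_add]; ring
    rw [hb]
    exact h1'.mul_left _
  -- helper products
  have hnd : n * d = d ^ 2 * e + d ^ 2 * ℓ := by rw [hnde]; ring
  have hmul : n * (d - 1) + n = n * d := by
    have hd' : d - 1 + 1 = d := Nat.succ_pred_eq_of_pos hd0
    calc n * (d - 1) + n = n * ((d - 1) + 1) := by ring
      _ = n * d := by rw [hd']
  have hgpow_ne : ((-g) ^ d ^ 2 : F[X]) ≠ 0 := pow_ne_zero _ (neg_ne_zero.mpr hg_ne)
  have hgpow_nd : ((-g) ^ d ^ 2 : F[X]).natDegree = d ^ 2 * m := by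
    rw [natDegree_pow' (by
      rw [← leadingCoeff_pow]
      exact leadingCoeff_ne_zero.mpr hgpow_ne), natDegree_neg]
  have hgpow_coeff : ((-g) ^ d ^ 2 : F[X]).coeff (d ^ 2 * m) ≠ 0 := by
    rw [← hgpow_nd, coeff_natDegree]
    exact leadingCoeff_ne_zero.mpr hgpow_ne
  have hdm_pos : 0 < d ^ 2 * m := Nat.mul_pos (pow_pos hd0 2) hg1
  rcases le_or_gt (d ^ 2 * ℓ) n with hcase | hcase
  · -- Case 1 : d^2*ℓ ≤ n
    set A := n - d ^ 2 * ℓ with hA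
    have hAeq : A + d ^ 2 * ℓ = n := Nat.sub_add_cancel hcase
    have hkey : A + n * (d - 1) = d ^ 2 * e := by linarith
    have hA1 : A < d ^ 2 * m := by
      have hr : d ^ 2 * (ℓ + m) = d ^ 2 * ℓ + d ^ 2 * m := by ring
      linarith
    have hA2 : d ^ 2 * m < e := by
      have hr : d * (d ^ 2 * m) = d ^ 3 * m := by ring
      have : d * (d ^ 2 * m) < d * e := by linarith
      exact Nat.lt_of_mul_lt_mul_left this
    have hdvd2 : f ∣ (X : F[X]) ^ (d ^ 2 * e) - X ^ A := hdvd_xx A _ (d - 1) hkey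
    have hpdvd : f ∣ (X : F[X]) ^ A - (-g) ^ d ^ 2 := by
      have heq : (X : F[X]) ^ A - (-g) ^ d ^ 2 =
          ((X : F[X]) ^ (d ^ 2 * e) - (-g) ^ d ^ 2) -
            ((X : F[X]) ^ (d ^ 2 * e) - X ^ A) := by ring
      rw [heq]
      exact dvd_sub hkey1 hdvd2
    have hpne : ((X : F[X]) ^ A - (-g) ^ d ^ 2) ≠ 0 := by
      intro h
      have hc : ((X : F[X]) ^ A - (-g) ^ d ^ 2).coeff (d ^ 2 * m) = 0 := by
        rw [h, coeff_zero]
      rw [coeff_sub, coeff_X_pow, if_neg (by omega : ¬ d ^ 2 * m = A), zero_sub,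
        neg_eq_zero] at hc
      exact hgpow_coeff hc
    have hpdeg : ((X : F[X]) ^ A - (-g) ^ d ^ 2).natDegree ≤ d ^ 2 * m := by
      refine le_trans (natDegree_sub_le _ _) ?_
      rw [natDegree_X_pow, hgpow_nd]
      omega
    have := natDegree_le_of_dvd hpdvd hpne
    rw [hfnd] at this
    omega
  · -- Case 2 : n < d^2*ℓ
    set A := d ^ 2 * ℓ - n with hA
    have hAeq : A + n = d ^ 2 * ℓ := Nat.sub_add_cancel hcase.le
    have hkey : A + d ^ 2 * e = n * (d - 1) := by linarith
    have hA2 : A + d ^ 2 * m < e := by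
      have h5 : d * (A + n) = d * (d ^ 2 * ℓ) := by rw [hAeq]
      have r1 : d * (A + n) = d * A + d * n := by ring
      have r2 : d * (d ^ 2 * ℓ) = d ^ 3 * ℓ := by ring
      have r3 : d * (d ^ 2 + 1) * ℓ = d ^ 3 * ℓ + d * ℓ := by ring
      have r4 : n * (d + 1) = n * d + n := by ring
      have r5 : d * n = n * d := by ring
      have r6 : d * (A + d ^ 2 * m) = d * A + d ^ 3 * m := by ring
      have h6 : d * (A + d ^ 2 * m) < d * e := by linarith
      exact Nat.lt_of_mul_lt_mul_left h6
    have hdvd2 : f ∣ (X : F[X]) ^ (n * (d - 1)) - 1 := by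
      have h := hdvd_xx 0 (n * (d - 1)) (d - 1) (by omega)
      simpa using h
    have hdvd3 : f ∣ (X : F[X]) ^ (n * (d - 1)) - X ^ A * (-g) ^ d ^ 2 := by
      have heq : (X : F[X]) ^ (n * (d - 1)) - X ^ A * (-g) ^ d ^ 2 =
          X ^ A * ((X : F[X]) ^ (d ^ 2 * e) - (-g) ^ d ^ 2) := by
        rw [← hkey, pow_add]; ring
      rw [heq]
      exact hkey1.mul_left _
    have hpdvd : f ∣ (X : F[X]) ^ A * (-g) ^ d ^ 2 - 1 := by
      have heq : (X : F[X]) ^ A * (-g) ^ d ^ 2 - 1 =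
          ((X : F[X]) ^ (n * (d - 1)) - 1) -
            ((X : F[X]) ^ (n * (d - 1)) - X ^ A * (-g) ^ d ^ 2) := by ring
      rw [heq]
      exact dvd_sub hdvd2 hdvd3
    have hpne : ((X : F[X]) ^ A * (-g) ^ d ^ 2 - 1) ≠ 0 := by
      intro h
      have hc : ((X : F[X]) ^ A * (-g) ^ d ^ 2 - 1).coeff (d ^ 2 * m + A) = 0 := by
        rw [h, coeff_zero]
      rw [coeff_sub, coeff_X_pow_mul, coeff_one,
        if_neg (by omega : ¬ d ^ 2 * m + A = 0), sub_zero] at hc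
      exact hgpow_coeff hc
    have hpdeg : ((X : F[X]) ^ A * (-g) ^ d ^ 2 - 1).natDegree ≤ A + d ^ 2 * m := by
      refine le_trans (natDegree_sub_le _ _) ?_
      have : ((X : F[X]) ^ A * (-g) ^ d ^ 2).natDegree ≤ A + d ^ 2 * m := by
        refine le_trans natDegree_mul_le ?_
        rw [natDegree_X_pow, hgpow_nd]
      rw [natDegree_one]
      omega
    have := natDegree_le_of_dvd hpdvd hpne
    rw [hfnd] at this
    omega
end

section
/- Let p be a prime with p ≡ 3 (mod 4), p > 3, and let r₁, r₂ ∈ F_p^* be quadratic residues with r₁ ≠ r₂. Then r₁ + r₂ ≠ 0, and if a ∈ F_p satisfies a(r₁+r₂) = −1, then the polynomial f(x) = x^{(p−1)/2 + 1} + a x² + a r₁ r₂ has root set exactly {r₁, r₂, −r₁, −r₂} in F_p^*. -/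
open Polynomial

theorem stmt_10 (p : ℕ) [NeZero p] (hp : p.Prime) (hp4 : p % 4 = 3) (hp3 : 3 < p)
    (r₁ r₂ : ZMod p) (hr₁0 : r₁ ≠ 0) (hr₂0 : r₂ ≠ 0)
    (hr₁ : IsSquare r₁) (hr₂ : IsSquare r₂) (hne : r₁ ≠ r₂) :
    r₁ + r₂ ≠ 0 ∧
    ∀ a : ZMod p, a * (r₁ + r₂) = -1 →
      ∀ f : (ZMod p)[X], f = X ^ ((p - 1) / 2 + 1) + C a * X ^ 2 + C (a * r₁ * r₂) →
        (Finset.univ.filter (fun x : ZMod p => x ≠ 0 ∧ f.eval x = 0))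
          = ({r₁, r₂, -r₁, -r₂} : Finset (ZMod p)) := by
  haveI : Fact p.Prime := ⟨hp⟩
  have hodd : p % 2 = 1 := by omega
  have hk : (p - 1) / 2 = p / 2 := by omega
  -- negation of a nonzero square is not a square
  have hnegsq : ∀ r : ZMod p, r ≠ 0 → IsSquare r → ¬ IsSquare (-r) := by
    rintro r hr0 ⟨y, hy⟩ ⟨z, hz⟩
    have hy0 : y ≠ 0 := by rintro rfl; apply hr0; rw [hy, mul_zero]
    have hsq : IsSquare (-1 : ZMod p) := by
      refine ⟨z * y⁻¹, ?_⟩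
      field_simp
      linear_combination hz + hy
    rw [ZMod.exists_sq_eq_neg_one_iff] at hsq
    exact hsq hp4
  have hs : r₁ + r₂ ≠ 0 := by
    intro h
    exact hnegsq r₁ hr₁0 hr₁ (by rw [show (-r₁ : ZMod p) = r₂ by linear_combination -h]; exact hr₂)
  -- dichotomy
  have hdich : ∀ x : ZMod p, x ≠ 0 → x ^ (p / 2) = 1 ∨ x ^ (p / 2) = -1 := by
    intro x hx
    have h1 := ZMod.pow_card_sub_one_eq_one hx
    have h2 : p - 1 = (p / 2) * 2 := by omega
    rw [h2, pow_mul, pow_two] at h1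
    exact mul_self_eq_one_iff.mp h1
  refine ⟨hs, ?_⟩
  intro a ha f hf
  subst hf
  ext x
  simp only [Finset.mem_filter, Finset.mem_univ, true_and, Finset.mem_insert,
    Finset.mem_singleton, eval_add, eval_pow, eval_mul, eval_X, eval_C, hk, pow_succ]
  constructor
  · rintro ⟨hx0, hx⟩
    rcases hdich x hx0 with h1 | h1
    · rw [h1, one_mul] at hx
      have hq : (x - r₁) * (x - r₂) = 0 := by
        linear_combination (-(r₁ + r₂)) * hx + (x ^ 2 + r₁ * r₂) * ha
      rcases mul_eq_zero.mp hq with h | h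
      · exact Or.inl (by linear_combination h)
      · exact Or.inr (Or.inl (by linear_combination h))
    · rw [h1] at hx
      have hq : (x + r₁) * (x + r₂) = 0 := by
        linear_combination (-(r₁ + r₂)) * hx + (x ^ 2 + r₁ * r₂) * ha
      rcases mul_eq_zero.mp hq with h | h
      · exact Or.inr (Or.inr (Or.inl (by linear_combination h)))
      · exact Or.inr (Or.inr (Or.inr (by linear_combination h)))
  · have hpow1 : r₁ ^ (p / 2) = 1 := (ZMod.euler_criterion p hr₁0).mp hr₁
    have hpow2 : r₂ ^ (p / 2) = 1 := (ZMod.euler_criterion p hr₂0).mp hr₂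
    have hnpow1 : (-r₁) ^ (p / 2) = -1 := by
      rcases hdich (-r₁) (neg_ne_zero.mpr hr₁0) with h | h
      · exact absurd ((ZMod.euler_criterion p (neg_ne_zero.mpr hr₁0)).mpr h)
          (hnegsq r₁ hr₁0 hr₁)
      · exact h
    have hnpow2 : (-r₂) ^ (p / 2) = -1 := by
      rcases hdich (-r₂) (neg_ne_zero.mpr hr₂0) with h | h
      · exact absurd ((ZMod.euler_criterion p (neg_ne_zero.mpr hr₂0)).mpr h)
          (hnegsq r₂ hr₂0 hr₂)
      · exact h
    rintro (h | h | h | h)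
    · rw [h]; exact ⟨hr₁0, by rw [hpow1]; linear_combination r₁ * ha⟩
    · rw [h]; exact ⟨hr₂0, by rw [hpow2]; linear_combination r₂ * ha⟩
    · rw [h]; exact ⟨neg_ne_zero.mpr hr₁0, by rw [hnpow1]; linear_combination r₁ * ha⟩
    · rw [h]; exact ⟨neg_ne_zero.mpr hr₂0, by rw [hnpow2]; linear_combination r₂ * ha⟩
end

section
/- Let q be a prime power and d a divisor of q−1. Let h(x) = Σ_{i=1}^{t} c_i x^{e_i} ∈ F_q[x] be a t-sparse polynomial, and suppose there exist integers a_i, b_i with e_i = a_i·(q−1)/d + b_i and −(q−1)/d < b_i < (q−1)/d for all i. Let A ≤ B be integers with all b_i ∈ [A, B]. If h does not vanish identically on any coset of the subgroup of d-th powers (F_q^*)^d in F_q^*, then the number of distinct roots of h in F_q^* is at most d(B − A). -/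
/-!
Put `m = (q - 1)/d`. Since `e_i ≡ b_i (mod m)`, on a coset `x₀ μ_m` of the `m`-th roots of unity
we have `h(x₀ y) = y^A g_{x₀}(y)` for a polynomial `g_{x₀}` of degree at most `B - A`. The coset
contains `x₀ (F^*)^d`, on which `h` does not vanish, so `g_{x₀} ≠ 0` and `h` has at most `B - A`
roots in the coset. Finally `x ↦ x^m` maps `F^*` into the `d`-th roots of unity, so the nonzero
roots of `h` meet at most `d` cosets.
-/

open Polynomial Finset

section CosetPoly

variable {F : Type*} [Field F] (t : ℕ) (c : ℕ → F) (e : ℕ → ℕ) (b : ℕ → ℤ) (A : ℤ)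

noncomputable def cosetPoly (x₀ : F) : F[X] :=
  ∑ i ∈ range t, C (c i * x₀ ^ e i) * X ^ (b i - A).toNat

variable {t c e b A}

theorem eval_sum_mul_eq_zpow_mul_eval_cosetPoly {a : ℕ → ℤ} {m : ℕ}
    (hab : ∀ i < t, (e i : ℤ) = a i * m + b i) (hA : ∀ i < t, A ≤ b i)
    (x₀ : F) {y : F} (hy : y ≠ 0) (hym : y ^ m = 1) :
    (∑ i ∈ range t, C (c i) * X ^ e i).eval (x₀ * y)
      = y ^ A * (cosetPoly t c e b A x₀).eval y := by
  simp only [cosetPoly, eval_finsetSum, eval_mul, eval_C, eval_pow, eval_X, mul_sum]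
  refine sum_congr rfl fun i hi => ?_
  have hit : i < t := mem_range.mp hi
  have hexp : y ^ e i = y ^ A * y ^ (b i - A).toNat := by
    rw [← zpow_natCast, hab i hit, zpow_add₀ hy, mul_comm (a i), zpow_mul, zpow_natCast, hym,
      one_zpow, one_mul, ← zpow_natCast, Int.toNat_of_nonneg (sub_nonneg.mpr (hA i hit)),
      ← zpow_add₀ hy, add_sub_cancel]
  rw [mul_pow, hexp]
  ring

theorem natDegree_cosetPoly_le {B : ℤ} (hA : ∀ i < t, A ≤ b i) (hB : ∀ i < t, b i ≤ B)
    (x₀ : F) : (cosetPoly t c e b A x₀).natDegree ≤ (B - A).toNat := by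
  refine natDegree_sum_le_of_forall_le _ _ fun i hi => ?_
  have hit := mem_range.mp hi
  refine (natDegree_C_mul_le _ _).trans ?_
  rw [natDegree_X_pow]
  have := hA i hit
  have := hB i hit
  omega

end CosetPoly

theorem card_filter_pow_eq_le_natDegree {F : Type*} [Field F] [DecidableEq F] {p g : F[X]}
    {m : ℕ} {A : ℤ} {x₀ : F} (hx₀ : x₀ ≠ 0) (hg : g ≠ 0)
    (hpg : ∀ y : F, y ≠ 0 → y ^ m = 1 → p.eval (x₀ * y) = y ^ A * g.eval y)
    (S : Finset F) (hS : ∀ x ∈ S, x ≠ 0 ∧ p.eval x = 0) :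
    #{x ∈ S | x ^ m = x₀ ^ m} ≤ g.natDegree := by
  refine (card_le_card_of_injOn (x₀⁻¹ * ·) ?_ (mul_right_injective₀ (inv_ne_zero hx₀)).injOn).trans
    ((Multiset.toFinset_card_le _).trans (card_roots' g))
  intro x hx
  obtain ⟨hxS, hxm⟩ := mem_filter.mp hx
  obtain ⟨hx, hpx⟩ := hS x hxS
  have hy : x₀⁻¹ * x ≠ 0 := mul_ne_zero (inv_ne_zero hx₀) hx
  have hym : (x₀⁻¹ * x) ^ m = 1 := by
    rw [mul_pow, inv_pow, hxm, inv_mul_cancel₀ (pow_ne_zero _ hx₀)]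
  have hroot := hpg _ hy hym
  rw [mul_inv_cancel_left₀ hx₀, hpx, eq_comm] at hroot
  rw [mem_coe, Multiset.mem_toFinset, mem_roots hg]
  exact (mul_eq_zero.mp hroot).resolve_left (zpow_ne_zero _ hy)

theorem card_image_pow_le {F : Type*} [Field F] [Fintype F] [DecidableEq F] {d m : ℕ}
    (hd0 : 0 < d) (hdm : d * m = Fintype.card F - 1) (S : Finset F) (hS : ∀ x ∈ S, x ≠ 0) :
    #(S.image (· ^ m)) ≤ d := by
  refine (card_le_card fun v hv => ?_).trans
    ((Multiset.toFinset_card_le _).trans (card_nthRoots d (1 : F)))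
  obtain ⟨x, hx, rfl⟩ := mem_image.mp hv
  rw [Multiset.mem_toFinset, mem_nthRoots hd0, ← pow_mul, mul_comm, hdm]
  exact FiniteField.pow_card_sub_one_eq_one x (hS x hx)

theorem stmt_12_general {F : Type*} [Field F] [Fintype F] [DecidableEq F]
    (d : ℕ) (hd0 : 0 < d) (hd : d ∣ Fintype.card F - 1)
    (t : ℕ) (c : ℕ → F) (e : ℕ → ℕ)
    (h : F[X]) (hh : h = ∑ i ∈ Finset.range t, C (c i) * X ^ (e i))
    (a b : ℕ → ℤ) (A B : ℤ) (hAB : A ≤ B)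
    (hab : ∀ i < t, (e i : ℤ) = a i * (((Fintype.card F - 1) / d : ℕ) : ℤ) + b i)
    (hA : ∀ i < t, A ≤ b i) (hB : ∀ i < t, b i ≤ B)
    (hnv : ∀ x₀ : F, x₀ ≠ 0 → ∃ y : F, y ≠ 0 ∧ h.eval (x₀ * y ^ d) ≠ 0) :
    ((Finset.univ.filter (fun x : F => x ≠ 0 ∧ h.eval x = 0)).card : ℤ)
      ≤ d * (B - A) := by
  set m := (Fintype.card F - 1) / d
  have hdm : d * m = Fintype.card F - 1 := Nat.mul_div_cancel' hd
  set S := univ.filter fun x : F => x ≠ 0 ∧ h.eval x = 0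
  have hS : ∀ x ∈ S, x ≠ 0 ∧ h.eval x = 0 := fun x hx => (mem_filter.mp hx).2
  have hfiber : ∀ v ∈ S.image (· ^ m), #{x ∈ S | x ^ m = v} ≤ (B - A).toNat := by
    intro v hv
    obtain ⟨x₀, hx₀S, rfl⟩ := mem_image.mp hv
    have hx₀ := (hS x₀ hx₀S).1
    have hpg := fun y (hy : y ≠ 0) (hym : y ^ m = 1) =>
      hh ▸ eval_sum_mul_eq_zpow_mul_eval_cosetPoly hab hA x₀ hy hym
    have hg : cosetPoly t c e b A x₀ ≠ 0 := by
      obtain ⟨y, hy, hne⟩ := hnv x₀ hx₀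
      have hym : (y ^ d) ^ m = 1 := by
        rw [← pow_mul, hdm, FiniteField.pow_card_sub_one_eq_one y hy]
      intro hzero
      rw [hpg _ (pow_ne_zero d hy) hym, hzero, eval_zero, mul_zero] at hne
      exact hne rfl
    exact (card_filter_pow_eq_le_natDegree hx₀ hg hpg S hS).trans (natDegree_cosetPoly_le hA hB x₀)
  have hcard : #S ≤ (B - A).toNat * d :=
    (card_le_mul_card_image S _ hfiber).trans
      (Nat.mul_le_mul_left _ (card_image_pow_le hd0 hdm S fun x hx => (hS x hx).1))
  calc (#S : ℤ) ≤ ((B - A).toNat * d : ℕ) := by exact_mod_cast hcard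
    _ = d * (B - A) := by push_cast [Int.toNat_of_nonneg (sub_nonneg.mpr hAB)]; ring

theorem stmt_12 {F : Type*} [Field F] [Fintype F] [DecidableEq F]
    (d : ℕ) (hd0 : 0 < d) (hd : d ∣ Fintype.card F - 1)
    (t : ℕ) (c : ℕ → F) (e : ℕ → ℕ)
    (h : F[X]) (hh : h = ∑ i ∈ Finset.range t, C (c i) * X ^ (e i))
    (a b : ℕ → ℤ) (A B : ℤ) (hAB : A ≤ B)
    (hab : ∀ i < t, (e i : ℤ) = a i * (((Fintype.card F - 1) / d : ℕ) : ℤ) + b i)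
    (hblb : ∀ i < t, -((((Fintype.card F - 1) / d : ℕ) : ℤ)) < b i)
    (hbub : ∀ i < t, b i < (((Fintype.card F - 1) / d : ℕ) : ℤ))
    (hA : ∀ i < t, A ≤ b i) (hB : ∀ i < t, b i ≤ B)
    (hnv : ∀ x₀ : F, x₀ ≠ 0 → ∃ y : F, y ≠ 0 ∧ h.eval (x₀ * y ^ d) ≠ 0) :
    ((Finset.univ.filter (fun x : F => x ≠ 0 ∧ h.eval x = 0)).card : ℤ)
      ≤ d * (B - A) :=
  stmt_12_general d hd0 hd t c e h hh a b A B hAB hab hA hB hnv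
end

section
/- Let q be a prime power and d a divisor of q−1. Let h(x) = Σ_{i=1}^{t} c_i x^{e_i} ∈ F_q[x] with (q−1)/d ≥ e_1 > e_2 > ⋯ > e_t and all c_i nonzero, and let δ = max{e_{i−1} − e_i : 2 ≤ i ≤ t} be the largest gap between consecutive exponents. If h does not vanish identically on any coset of (F_q^*)^d, then the number of distinct roots of h in F_q^* is at most q − 1 − dδ. -/
/-!
Fix `x₀ ≠ 0` and let `B = d e_{i-1}`, `A = d e_i` for a pair of exponents realising `δ`.
The polynomial `y ↦ h(x₀ y^d)` has degree at most `q - 1` and no monomials strictly between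
`A` and `B`. On `F_q^*`, where `y^(q-1) = 1`, it equals `y^B P(y)` with `P` obtained by dividing
the high part by `X^B` and multiplying the low part by `X^(q-1-B)`; so `deg P ≤ q - 1 - (B - A)`,
and since `P ≠ 0` the polynomial `y ↦ h(x₀ y^d)` has at least `dδ` non-roots in `F_q^*`.
Counting the pairs `(x₀, y)` with `h(x₀ y^d) ≠ 0` both ways, using that `x ↦ x y^d` permutes
`F_q^*`, transfers this bound to the non-roots of `h` itself.
-/

open Polynomial Finset

def HasCoeffGap {R : Type*} [Semiring R] (p : R[X]) (A B : ℕ) : Prop :=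
  ∀ n, A < n → n < B → p.coeff n = 0

section Semiring

variable {R : Type*} [Semiring R]

theorem hasCoeffGap_sum_C_mul_X_pow {t i₀ : ℕ} {c : ℕ → R} {e : ℕ → ℕ}
    (he : AntitoneOn e (Set.Iio t)) (hi₀ : 1 ≤ i₀) (hi₀t : i₀ < t) :
    HasCoeffGap (∑ i ∈ range t, C (c i) * X ^ e i) (e i₀) (e (i₀ - 1)) := by
  intro n hlo hhi
  rw [finsetSum_coeff]
  refine sum_eq_zero fun i hi => ?_
  rw [mem_range] at hi
  rw [coeff_C_mul_X_pow, if_neg]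
  rintro rfl
  rcases lt_or_ge i i₀ with hlt | hge
  · have : e (i₀ - 1) ≤ e i := he (by simpa using hi) (by simp; omega) (by omega)
    omega
  · have : e i ≤ e i₀ := he (by simpa using hi₀t) (by simpa using hi) hge
    omega

theorem natDegree_sum_C_mul_X_pow_le {t : ℕ} {c : ℕ → R} {e : ℕ → ℕ}
    (he : AntitoneOn e (Set.Iio t)) :
    (∑ i ∈ range t, C (c i) * X ^ e i).natDegree ≤ e 0 := by
  refine natDegree_sum_le_of_forall_le _ _ fun i hi => (natDegree_C_mul_X_pow_le _ _).trans ?_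
  rw [mem_range] at hi
  exact he (by simp; omega) (by simpa using hi) (Nat.zero_le i)

/-- On elements with `y ^ N = 1` this agrees with `p / X ^ B`: the exponents below `B`
are raised by `N` to keep them nonnegative. -/
noncomputable def cyclicDivXPow (p : R[X]) (B N : ℕ) : R[X] :=
  ∑ n ∈ range (N + 1), C (p.coeff n) * X ^ (if B ≤ n then n - B else n + (N - B))

theorem natDegree_cyclicDivXPow_le {p : R[X]} {A B N : ℕ} (hp : HasCoeffGap p A B)
    (hAB : A ≤ B) (hBN : B ≤ N) : (cyclicDivXPow p B N).natDegree ≤ N - (B - A) := by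
  refine natDegree_sum_le_of_forall_le _ _ fun n hn => ?_
  rw [mem_range] at hn
  by_cases hgap : A < n ∧ n < B
  · rw [hp n hgap.1 hgap.2, C_0, zero_mul, natDegree_zero]
    exact Nat.zero_le _
  · refine (natDegree_C_mul_X_pow_le _ _).trans ?_
    split_ifs <;> omega

end Semiring

section CommSemiring

variable {R : Type*} [CommSemiring R]

theorem pow_mul_eval_cyclicDivXPow {p : R[X]} {B N : ℕ} (hp : p.natDegree ≤ N) (hBN : B ≤ N)
    {y : R} (hy : y ^ N = 1) : y ^ B * (cyclicDivXPow p B N).eval y = p.eval y := by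
  rw [eval_eq_sum_range' (Nat.lt_succ_of_le hp), cyclicDivXPow, eval_finsetSum, mul_sum]
  refine sum_congr rfl fun n _ => ?_
  rw [eval_mul, eval_C, eval_pow, eval_X, mul_left_comm, ← pow_add]
  split_ifs with h
  · rw [Nat.add_sub_cancel' h]
  · rw [show B + (n + (N - B)) = n + N by omega, pow_add, hy, mul_one]

theorem HasCoeffGap.comp_C_mul_X {p : R[X]} {A B : ℕ} (hp : HasCoeffGap p A B) (a : R) :
    HasCoeffGap (p.comp (C a * X)) A B := by
  intro n hlo hhi
  rw [comp_C_mul_X_coeff, hp n hlo hhi, zero_mul]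

theorem HasCoeffGap.expand {p : R[X]} {A B : ℕ} (hp : HasCoeffGap p A B) (d : ℕ) :
    HasCoeffGap (expand R d p) (d * A) (d * B) := by
  intro n hlo hhi
  rcases Nat.eq_zero_or_pos d with rfl | hd
  · omega
  rw [coeff_expand hd]
  split_ifs with hdvd
  · obtain ⟨m, rfl⟩ := hdvd
    rw [Nat.mul_div_cancel_left m hd]
    exact hp m (Nat.lt_of_mul_lt_mul_left hlo) (Nat.lt_of_mul_lt_mul_left hhi)
  · rfl

theorem eval_expand_comp_C_mul_X (p : R[X]) (d : ℕ) (a y : R) :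
    (expand R d (p.comp (C a * X))).eval y = p.eval (a * y ^ d) := by
  rw [expand_eval, eval_comp, eval_mul, eval_C, eval_X]

theorem natDegree_expand_comp_C_mul_X_le (p : R[X]) (d : ℕ) (a : R) :
    (expand R d (p.comp (C a * X))).natDegree ≤ d * p.natDegree := by
  rw [natDegree_expand, mul_comm]
  refine Nat.mul_le_mul_left d (natDegree_comp_le.trans ?_)
  exact (Nat.mul_le_mul_left _ ((natDegree_C_mul_le a X).trans natDegree_X_le)).trans
    (mul_one _).le

end CommSemiring

theorem card_filter_ne_zero_add_card_filter_ne_zero_not {α : Type*} [Fintype α]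
    [DecidableEq α] [Zero α] (P : α → Prop) [DecidablePred P] :
    #{x | x ≠ 0 ∧ P x} + #{x | x ≠ 0 ∧ ¬P x} = Fintype.card α - 1 := by
  rw [← filter_filter, ← filter_filter, card_filter_add_card_filter_not, filter_ne',
    card_erase_of_mem (mem_univ 0), card_univ]

theorem card_filter_units {G₀ : Type*} [GroupWithZero G₀] [Fintype G₀] [DecidableEq G₀]
    (P : G₀ → Prop) [DecidablePred P] :
    #{u : G₀ˣ | P u} = #{x | x ≠ 0 ∧ P x} := by
  refine card_bij (fun u _ => (u : G₀)) (fun u hu => ?_) (fun _ _ _ _ h => Units.ext h)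
    fun x hx => ?_
  · simp only [mem_filter, mem_univ, true_and] at hu ⊢
    exact ⟨u.ne_zero, hu⟩
  · simp only [mem_filter, mem_univ, true_and] at hx ⊢
    exact ⟨Units.mk0 x hx.1, hx.2, rfl⟩

theorem le_card_filter_of_forall_le_card_filter_mul {G : Type*} [Group G] [Fintype G]
    (P : G → Prop) [DecidablePred P] (g : G → G) (m : ℕ)
    (h : ∀ x, m ≤ #{y | P (x * g y)}) : m ≤ #{x | P x} := by
  have hsum : ∑ x, #{y | P (x * g y)} = ∑ _y : G, #{x | P x} := by
    simp_rw [card_filter]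
    rw [sum_comm]
    exact sum_congr rfl fun y _ =>
      Equiv.sum_comp (Equiv.mulRight (g y)) (fun x => if P x then 1 else 0)
  have hle : ∑ _x : G, m ≤ ∑ _y : G, #{x | P x} := hsum ▸ sum_le_sum fun x _ => h x
  simp only [sum_const, smul_eq_mul] at hle
  exact Nat.le_of_mul_le_mul_left hle (card_pos.mpr univ_nonempty)

theorem HasCoeffGap.sub_le_card_filter_eval_ne_zero {F : Type*} [Field F] [Fintype F]
    [DecidableEq F] {p : F[X]} {A B : ℕ} (hp : HasCoeffGap p A B)
    (hdeg : p.natDegree ≤ Fintype.card F - 1) (hAB : A ≤ B) (hB : B ≤ Fintype.card F - 1)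
    (hne : ∃ y ≠ 0, p.eval y ≠ 0) : B - A ≤ #{y | y ≠ 0 ∧ p.eval y ≠ 0} := by
  set P := cyclicDivXPow p B (Fintype.card F - 1)
  have hPeval (y : F) (hy : y ≠ 0) : y ^ B * P.eval y = p.eval y :=
    pow_mul_eval_cyclicDivXPow hdeg hB (FiniteField.pow_card_sub_one_eq_one y hy)
  have hP0 : P ≠ 0 := by
    obtain ⟨y, hy, hpy⟩ := hne
    rintro hP
    rw [← hPeval y hy, hP, eval_zero, mul_zero] at hpy
    exact hpy rfl
  have hzeros : #{y | y ≠ 0 ∧ p.eval y = 0} ≤ Fintype.card F - 1 - (B - A) := calc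
    _ ≤ P.roots.toFinset.card := card_le_card fun y hy => by
        simp only [mem_filter, mem_univ, true_and] at hy
        rw [Multiset.mem_toFinset, mem_roots hP0, IsRoot.def]
        exact (mul_eq_zero.mp ((hPeval y hy.1).trans hy.2)).resolve_left (pow_ne_zero _ hy.1)
    _ ≤ Multiset.card P.roots := Multiset.toFinset_card_le _
    _ ≤ P.natDegree := card_roots' P
    _ ≤ _ := natDegree_cyclicDivXPow_le hp hAB hB
  have hsplit := card_filter_ne_zero_add_card_filter_ne_zero_not (fun y => p.eval y = 0)
  simp only [← ne_eq] at hsplit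
  omega

theorem stmt_13_general {F : Type*} [Field F] [Fintype F] [DecidableEq F]
    (d : ℕ)
    (t : ℕ) (c : ℕ → F) (e : ℕ → ℕ)
    (he : ∀ i, ∀ j, i < j → j < t → e j < e i)
    (he1 : e 0 ≤ (Fintype.card F - 1) / d)
    (h : F[X]) (hh : h = ∑ i ∈ Finset.range t, C (c i) * X ^ (e i))
    (δ : ℕ)
    (hδmem : ∃ i, 1 ≤ i ∧ i < t ∧ e (i - 1) - e i = δ)
    (hnv : ∀ x₀ : F, x₀ ≠ 0 → ∃ y : F, y ≠ 0 ∧ h.eval (x₀ * y ^ d) ≠ 0) :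
    (Finset.univ.filter (fun x : F => x ≠ 0 ∧ h.eval x = 0)).card
      ≤ Fintype.card F - 1 - d * δ := by
  obtain ⟨i₀, hi₀, hi₀t, rfl⟩ := hδmem
  have hanti : AntitoneOn e (Set.Iio t) := fun i _ j hj hij =>
    hij.eq_or_lt.elim (fun hij => hij ▸ le_rfl) fun hij => (he i j hij hj).le
  have hgap : HasCoeffGap h (e i₀) (e (i₀ - 1)) :=
    hh ▸ hasCoeffGap_sum_C_mul_X_pow hanti hi₀ hi₀t
  have hdeg : h.natDegree ≤ e 0 := hh ▸ natDegree_sum_C_mul_X_pow_le hanti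
  have he0 : d * e 0 ≤ Fintype.card F - 1 :=
    (Nat.mul_le_mul_left d he1).trans (Nat.mul_div_le _ _)
  have hfiber (x₀ : Fˣ) :
      d * (e (i₀ - 1) - e i₀) ≤ #{y : Fˣ | h.eval ↑(x₀ * y ^ d) ≠ 0} := by
    have hcount := ((hgap.comp_C_mul_X x₀).expand d).sub_le_card_filter_eval_ne_zero
      ((natDegree_expand_comp_C_mul_X_le h d x₀).trans ((Nat.mul_le_mul_left d hdeg).trans he0))
      (Nat.mul_le_mul_left d (hanti (by simp; omega) (by simpa using hi₀t) (by omega)))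
      ((Nat.mul_le_mul_left d (hanti (by simp; omega) (by simp; omega) (Nat.zero_le _))).trans he0)
      (by simpa only [eval_expand_comp_C_mul_X] using hnv x₀ x₀.ne_zero)
    simp only [eval_expand_comp_C_mul_X, ← Nat.mul_sub] at hcount
    simp only [Units.val_mul, Units.val_pow_eq_pow_val]
    rwa [card_filter_units (fun y : F => h.eval (x₀ * y ^ d) ≠ 0)]
  have hS := le_card_filter_of_forall_le_card_filter_mul (fun u : Fˣ => h.eval (u : F) ≠ 0)
    (fun y : Fˣ => y ^ d) _ hfiber
  rw [card_filter_units (fun x => h.eval x ≠ 0)] at hS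
  have hsplit := card_filter_ne_zero_add_card_filter_ne_zero_not (fun x => h.eval x = 0)
  simp only [← ne_eq] at hsplit
  omega

theorem stmt_13 {F : Type*} [Field F] [Fintype F] [DecidableEq F]
    (d : ℕ) (hd0 : 0 < d) (hd : d ∣ Fintype.card F - 1)
    (t : ℕ) (ht : 2 ≤ t) (c : ℕ → F) (e : ℕ → ℕ)
    (hc : ∀ i < t, c i ≠ 0)
    (he : ∀ i, ∀ j, i < j → j < t → e j < e i)
    (he1 : e 0 ≤ (Fintype.card F - 1) / d)
    (h : F[X]) (hh : h = ∑ i ∈ Finset.range t, C (c i) * X ^ (e i))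
    (δ : ℕ)
    (hδub : ∀ i, 1 ≤ i → i < t → e (i - 1) - e i ≤ δ)
    (hδmem : ∃ i, 1 ≤ i ∧ i < t ∧ e (i - 1) - e i = δ)
    (hnv : ∀ x₀ : F, x₀ ≠ 0 → ∃ y : F, y ≠ 0 ∧ h.eval (x₀ * y ^ d) ≠ 0) :
    (Finset.univ.filter (fun x : F => x ≠ 0 ∧ h.eval x = 0)).card
      ≤ Fintype.card F - 1 - d * δ :=
  stmt_13_general d t c e he he1 h hh δ hδmem hnv
end

section
/- Let q be a prime power and h(x) = Σ_{i=1}^t c_i x^{e_i} ∈ F_q[x] a t-sparse polynomial (t ≥ 2, all c_i nonzero, e_1 > ⋯ > e_t ≥ 0) that is not identically zero on F_q^*. Then the number of distinct roots of h in F_q^* is at most ((t−1)/t)(q−1). -/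
open Polynomial Matrix

lemma vander_key {F : Type*} [Field F] {s : ℕ} (hs : 0 < s) (w a : Fin s → F)
    (hw : Function.Injective w) (ha : ∀ k, a k ≠ 0)
    (hz : ∀ j : Fin s, ∑ k, a k * w k ^ (j : ℕ) = 0) : False := by
  have hdet : (Matrix.vandermonde w).det ≠ 0 := by
    rw [Matrix.det_vandermonde_ne_zero_iff]; exact hw
  have h2 : (Matrix.vandermonde w)ᵀ.mulVec a = 0 := by
    funext j
    simpa [Matrix.mulVec, dotProduct, Matrix.vandermonde, mul_comm] using hz j
  have := Matrix.eq_zero_of_mulVec_eq_zero (by rwa [Matrix.det_transpose]) h2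
  exact ha ⟨0, hs⟩ (congrFun this _)

theorem stmt_14 {F : Type*} [Field F] [Fintype F] [DecidableEq F]
    (t : ℕ) (ht : 2 ≤ t) (c : ℕ → F) (e : ℕ → ℕ)
    (hc : ∀ i < t, c i ≠ 0)
    (he : ∀ i, ∀ j, i < j → j < t → e j < e i)
    (h : F[X]) (hh : h = ∑ i ∈ Finset.range t, C (c i) * X ^ (e i))
    (hnz : ∃ x : F, x ≠ 0 ∧ h.eval x ≠ 0) :
    ((Finset.univ.filter (fun x : F => x ≠ 0 ∧ h.eval x = 0)).card : ℝ)
      ≤ ((t - 1 : ℝ) / t) * (Fintype.card F - 1) := by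
  classical
  set n : ℕ := Fintype.card F - 1 with hndef
  have hcard1 : 1 ≤ Fintype.card F := Fintype.card_pos
  have hcardF : Fintype.card F = n + 1 := by omega
  have hn : 0 < n := by
    have : 1 < Fintype.card F := Fintype.one_lt_card
    omega
  have hpow : ∀ y : F, y ≠ 0 → y ^ n = 1 := fun y hy =>
    FiniteField.pow_card_sub_one_eq_one y hy
  -- generator
  obtain ⟨g, hg⟩ := IsCyclic.exists_generator (α := Fˣ)
  have hord : orderOf g = n := by
    rw [orderOf_eq_card_of_forall_mem_zpowers hg, Nat.card_eq_fintype_card,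
      Fintype.card_units, hndef]
  -- grouped coefficients
  set b : ℕ → F := fun d => ∑ i ∈ (Finset.range t).filter (fun i => e i % n = d), c i with hbdef
  set D' : Finset ℕ :=
    ((Finset.range t).image (fun i => e i % n)).filter (fun d => b d ≠ 0) with hD'def
  -- eval formula
  have heval : ∀ y : F, y ≠ 0 → h.eval y = ∑ d ∈ D', b d * y ^ d := by
    intro y hy
    have hy' : ∀ i : ℕ, y ^ (e i) = y ^ (e i % n) := by
      intro i
      conv_lhs => rw [← Nat.div_add_mod (e i) n]
      rw [pow_add, pow_mul, hpow y hy, one_pow, one_mul]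
    have h1 : h.eval y = ∑ i ∈ Finset.range t, c i * y ^ (e i % n) := by
      rw [hh]
      simp only [eval_finset_sum, eval_mul, eval_C, eval_pow, eval_X]
      exact Finset.sum_congr rfl fun i _ => by rw [hy']
    rw [h1, ← Finset.sum_fiberwise_of_maps_to (g := fun i => e i % n)
      (fun i hi => Finset.mem_image_of_mem _ hi) (fun i => c i * y ^ (e i % n))]
    have h2 : ∀ d ∈ (Finset.range t).image (fun i => e i % n),
        ∑ i ∈ (Finset.range t).filter (fun i => e i % n = d), c i * y ^ (e i % n)
          = b d * y ^ d := by
      intro d hd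
      rw [hbdef, Finset.sum_mul]
      exact Finset.sum_congr rfl fun i hi => by rw [(Finset.mem_filter.mp hi).2]
    rw [Finset.sum_congr rfl h2, hD'def]
    refine (Finset.sum_filter_of_ne ?_).symm
    intro d _ hne hb
    exact hne (by rw [hb, zero_mul])
  set s : ℕ := D'.card with hsdef
  have hst : s ≤ t := by
    calc s ≤ ((Finset.range t).image (fun i => e i % n)).card := Finset.card_filter_le _ _
    _ ≤ t := by simpa using Finset.card_image_le (s := Finset.range t) (f := fun i => e i % n)
  have hs1 : 0 < s := by
    obtain ⟨x, hx0, hx⟩ := hnz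
    rw [heval x hx0] at hx
    rcases Finset.card_pos.mpr (Finset.nonempty_of_sum_ne_zero (by simpa using hx)) with h'
    exact h'
  have hdlt : ∀ d ∈ D', d < n := by
    intro d hd
    rw [hD'def, Finset.mem_filter, Finset.mem_image] at hd
    obtain ⟨⟨i, _, hi⟩, _⟩ := hd
    exact hi ▸ Nat.mod_lt _ hn
  -- key step
  have key : ∀ x : F, x ≠ 0 → ∃ j < s, h.eval ((g : F) ^ j * x) ≠ 0 := by
    intro x hx
    by_contra hcon
    push_neg at hcon
    set emb := D'.orderIsoOfFin hsdef.symm with hembdef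
    set w : Fin s → F := fun k => (g : F) ^ ((emb k : ℕ)) with hwdef
    set a : Fin s → F := fun k => b (emb k) * x ^ ((emb k : ℕ)) with hadef
    have hmem : ∀ k, ((emb k : ℕ)) ∈ D' := fun k => (emb k).2
    have hw : Function.Injective w := by
      intro k1 k2 hk
      have hu : (g ^ ((emb k1 : ℕ)) : Fˣ) = g ^ ((emb k2 : ℕ)) := by
        apply Units.ext
        simpa [hwdef] using hk
      have hinj := pow_injOn_Iio_orderOf (x := g)
        (by rw [hord]; exact Set.mem_Iio.mpr (hdlt _ (hmem k1)))
        (by rw [hord]; exact Set.mem_Iio.mpr (hdlt _ (hmem k2))) hu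
      have : emb k1 = emb k2 := Subtype.ext hinj
      exact emb.injective this
    have ha : ∀ k, a k ≠ 0 := by
      intro k
      have hb : b ((emb k : ℕ)) ≠ 0 := (Finset.mem_filter.mp (hmem k)).2
      exact mul_ne_zero hb (pow_ne_zero _ hx)
    have hz : ∀ j : Fin s, ∑ k, a k * w k ^ (j : ℕ) = 0 := by
      intro j
      have hev := hcon (j : ℕ) j.2
      rw [heval _ (mul_ne_zero (pow_ne_zero _ (Units.ne_zero g)) hx)] at hev
      have hrw : ∀ d ∈ D', b d * ((g : F) ^ (j : ℕ) * x) ^ d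
          = (b d * x ^ d) * ((g : F) ^ d) ^ (j : ℕ) := by
        intro d _
        rw [mul_pow, ← pow_mul, ← pow_mul, Nat.mul_comm]
        ring
      rw [Finset.sum_congr rfl hrw] at hev
      calc ∑ k, a k * w k ^ (j : ℕ)
          = ∑ d : D', (b (d : ℕ) * x ^ (d : ℕ)) * ((g : F) ^ (d : ℕ)) ^ (j : ℕ) :=
            Fintype.sum_equiv emb.toEquiv _ _ (fun k => rfl)
        _ = ∑ d ∈ D', (b d * x ^ d) * ((g : F) ^ d) ^ (j : ℕ) :=
            Finset.sum_coe_sort D' (fun d => (b d * x ^ d) * ((g : F) ^ d) ^ (j : ℕ))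
        _ = 0 := hev
    exact vander_key hs1 w a hw ha hz
  -- counting
  set S : Finset F := Finset.univ.filter (fun x : F => x ≠ 0) with hSdef
  set N : Finset F := Finset.univ.filter (fun x : F => x ≠ 0 ∧ h.eval x ≠ 0) with hNdef
  set Z : Finset F := Finset.univ.filter (fun x : F => x ≠ 0 ∧ h.eval x = 0) with hZdef
  have hScard : S.card = n := by
    rw [hSdef, Finset.filter_ne' Finset.univ 0, Finset.card_erase_of_mem (Finset.mem_univ 0),
      Finset.card_univ, hndef]
  have hZN : Z.card + N.card = n := by
    have hZ : Z = S.filter (fun x => h.eval x = 0) := by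
      rw [hSdef, Finset.filter_filter]
    have hN : N = S.filter (fun x => ¬ h.eval x = 0) := by
      rw [hSdef, Finset.filter_filter]
    rw [hZ, hN, Finset.card_filter_add_card_filter_not, hScard]
  have hcount : n ≤ s * N.card := by
    have step1 : S.card ≤
        ∑ x ∈ S, ((Finset.range s).filter (fun j => h.eval ((g : F) ^ j * x) ≠ 0)).card := by
      rw [Finset.card_eq_sum_ones S]
      refine Finset.sum_le_sum fun x hxS => ?_
      have hx : x ≠ 0 := (Finset.mem_filter.mp hxS).2
      obtain ⟨j, hj, hne⟩ := key x hx
      exact Finset.card_pos.mpr ⟨j, Finset.mem_filter.mpr ⟨Finset.mem_range.mpr hj, hne⟩⟩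
    have step2 : ∑ x ∈ S, ((Finset.range s).filter
          (fun j => h.eval ((g : F) ^ j * x) ≠ 0)).card
        = ∑ j ∈ Finset.range s, (S.filter (fun x => h.eval ((g : F) ^ j * x) ≠ 0)).card := by
      simp only [Finset.card_filter]
      exact Finset.sum_comm
    have step3 : ∀ j, (S.filter (fun x => h.eval ((g : F) ^ j * x) ≠ 0)).card = N.card := by
      intro j
      refine Finset.card_bij' (fun x _ => (g : F) ^ j * x)
        (fun y _ => ((g⁻¹ : Fˣ) : F) ^ j * y) ?_ ?_ ?_ ?_
      · intro x hxm
        rw [Finset.mem_filter] at hxm ⊢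
        obtain ⟨hxS, hne⟩ := hxm
        have hx : x ≠ 0 := (Finset.mem_filter.mp hxS).2
        exact ⟨Finset.mem_univ _,
          mul_ne_zero (pow_ne_zero _ (Units.ne_zero g)) hx, hne⟩
      · intro y hym
        rw [Finset.mem_filter] at hym ⊢
        obtain ⟨-, hy, hne⟩ := hym
        have hgg : (g : F) ^ j * (((g⁻¹ : Fˣ) : F) ^ j * y) = y := by
          rw [← mul_assoc, ← mul_pow]
          simp
        refine ⟨Finset.mem_filter.mpr ⟨Finset.mem_univ _,
          mul_ne_zero (pow_ne_zero _ (Units.ne_zero g⁻¹)) hy⟩, ?_⟩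
        rw [hgg]; exact hne
      · intro x _
        show ((g⁻¹ : Fˣ) : F) ^ j * ((g : F) ^ j * x) = x
        rw [← mul_assoc, ← mul_pow]
        simp
      · intro y _
        show (g : F) ^ j * (((g⁻¹ : Fˣ) : F) ^ j * y) = y
        rw [← mul_assoc, ← mul_pow]
        simp
    calc n = S.card := hScard.symm
      _ ≤ _ := step1
      _ = _ := step2
      _ = ∑ _j ∈ Finset.range s, N.card := Finset.sum_congr rfl fun j _ => step3 j
      _ = s * N.card := by rw [Finset.sum_const, Finset.card_range, smul_eq_mul]
  -- final arithmetic
  have hcast : ((Fintype.card F : ℝ) - 1) = (n : ℝ) := by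
    rw [hcardF]; push_cast; ring
  rw [hcast]
  have ht0 : (0 : ℝ) < t := by positivity
  rw [div_mul_eq_mul_div, le_div_iff₀ ht0]
  have h1 : (n : ℝ) ≤ t * N.card := by
    have e1 : (n : ℝ) ≤ s * N.card := by exact_mod_cast hcount
    have e2 : (s : ℝ) ≤ t := by exact_mod_cast hst
    nlinarith [Nat.cast_nonneg (α := ℝ) N.card]
  have h2 : (Z.card : ℝ) + N.card = n := by exact_mod_cast hZN
  nlinarith [h1, h2]
end

section
/- Let q be a prime power. Let h(x) = Σ_{j=1}^m c_j x^{(q−1)/d_j} + a x + b ∈ F_q[x], where each d_j divides q−1, d_j < q−1, a ≠ 0, and, with d = lcm{d_1,…,d_m}, h does not vanish identically on any coset of (F_q^*)^d. Then the number of distinct roots of h in F_q^* is at most lcm{d_1, …, d_m}. -/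
open Polynomial

lemma aux_pow_root {G : Type*} [Group G] [Fintype G] [IsCyclic G]
    {d : ℕ} (hd : d ∣ Fintype.card G) (hd0 : 0 < d)
    {u : G} (hu : u ^ (Fintype.card G / d) = 1) : ∃ y : G, y ^ d = u := by
  obtain ⟨g, hg⟩ := IsCyclic.exists_generator (α := G)
  obtain ⟨k, hk⟩ := mem_powers_iff_mem_zpowers.2 (hg u)
  simp only at hk
  have horder : orderOf g = Fintype.card G := by
    rw [orderOf_eq_card_of_forall_mem_zpowers hg, Nat.card_eq_fintype_card]
  set n := Fintype.card G with hn
  set e := n / d with he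
  have hne : n = d * e := (Nat.mul_div_cancel' hd).symm
  have hn0 : 0 < n := Fintype.card_pos
  have he0 : 0 < e := by
    rcases Nat.eq_zero_or_pos e with h0 | h0
    · rw [hne, h0, mul_zero] at hn0; exact absurd hn0 (lt_irrefl 0)
    · exact h0
  have hdvd : n ∣ k * e := by
    rw [← horder]
    apply orderOf_dvd_of_pow_eq_one
    rw [pow_mul, hk]; exact hu
  rw [hne] at hdvd
  have hdk : d ∣ k := (Nat.mul_dvd_mul_iff_right he0).1 hdvd
  refine ⟨g ^ (k / d), ?_⟩
  rw [← pow_mul, Nat.div_mul_cancel hdk, hk]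

lemma aux_field_root {F : Type*} [Field F] [Fintype F] [DecidableEq F]
    {d : ℕ} (hd : d ∣ Fintype.card F - 1)
    {u : F} (hu0 : u ≠ 0) (hu : u ^ ((Fintype.card F - 1) / d) = 1) :
    ∃ y : F, y ≠ 0 ∧ y ^ d = u := by
  have hcard : Fintype.card Fˣ = Fintype.card F - 1 := Fintype.card_units F
  have hd' : d ∣ Fintype.card Fˣ := by rw [hcard]; exact hd
  have hd0 : 0 < d := by
    rcases Nat.eq_zero_or_pos d with h0 | h0
    · exfalso
      rw [h0] at hd
      have : Fintype.card F - 1 = 0 := Nat.eq_zero_of_zero_dvd hd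
      have h2 : 1 < Fintype.card F := Fintype.one_lt_card
      omega
    · exact h0
  have hU : (Units.mk0 u hu0) ^ (Fintype.card Fˣ / d) = 1 := by
    ext
    rw [Units.val_pow_eq_pow_val, hcard]
    exact hu
  obtain ⟨y, hy⟩ := aux_pow_root hd' hd0 hU
  refine ⟨(y : F), Units.ne_zero y, ?_⟩
  rw [← Units.val_pow_eq_pow_val, hy, Units.val_mk0]

theorem stmt_15 {F : Type*} [Field F] [Fintype F] [DecidableEq F]
    (m : ℕ) (c : ℕ → F) (dj : ℕ → ℕ) (a b : F) (ha : a ≠ 0)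
    (hdj : ∀ j < m, 0 < dj j ∧ dj j ∣ Fintype.card F - 1 ∧ dj j < Fintype.card F - 1)
    (d : ℕ) (hdlcm : d = (Finset.range m).lcm dj) (hd : d ∣ Fintype.card F - 1)
    (h : F[X])
    (hh : h = (∑ j ∈ Finset.range m, C (c j) * X ^ ((Fintype.card F - 1) / dj j))
            + C a * X + C b)
    (hnv : ∀ x₀ : F, x₀ ≠ 0 → ∃ y : F, y ≠ 0 ∧ h.eval (x₀ * y ^ d) ≠ 0) :
    (Finset.univ.filter (fun x : F => x ≠ 0 ∧ h.eval x = 0)).card ≤ d := by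
  classical
  set nq := Fintype.card F - 1 with hnq
  have hnq0 : 0 < nq := by
    have h2 : 1 < Fintype.card F := Fintype.one_lt_card
    omega
  have hd0 : 0 < d := by
    rcases Nat.eq_zero_or_pos d with h0 | h0
    · exfalso; rw [h0] at hd; have := Nat.eq_zero_of_zero_dvd hd; omega
    · exact h0
  -- key multiplicativity: dj j ∣ d, and y^(d * (nq / dj j)) = 1 for y ≠ 0
  have hpow1 : ∀ y : F, y ≠ 0 → ∀ j ∈ Finset.range m, (y ^ d) ^ (nq / dj j) = 1 := by
    intro y hy j hj
    obtain ⟨hj0, hjd, _⟩ := hdj j (Finset.mem_range.1 hj)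
    have hjdvd : dj j ∣ d := hdlcm ▸ Finset.dvd_lcm hj
    obtain ⟨t, ht⟩ := hjdvd
    rw [← pow_mul]
    have : d * (nq / dj j) = t * nq := by
      rw [ht, mul_comm (dj j) t, mul_assoc, Nat.mul_div_cancel' hjd]
    rw [this, mul_comm, pow_mul, FiniteField.pow_card_sub_one_eq_one y hy, one_pow]
  -- evaluation on a coset
  have heval : ∀ x y : F, y ≠ 0 →
      h.eval (x * y ^ d) =
        (∑ j ∈ Finset.range m, c j * x ^ (nq / dj j)) + a * (x * y ^ d) + b := by
    intro x y hy
    rw [hh]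
    simp only [eval_add, eval_mul, eval_C, eval_X, eval_finset_sum, eval_pow]
    congr 1
    congr 1
    refine Finset.sum_congr rfl fun j hj => ?_
    rw [mul_pow, hpow1 y hy j hj, mul_one]
  set S := Finset.univ.filter (fun x : F => x ≠ 0 ∧ h.eval x = 0) with hS
  set f : F → F := fun x => x ^ (nq / d) with hf
  have hinj : Set.InjOn f ↑S := by
    intro x hx x' hx' hfe
    simp only [hS, Finset.coe_filter, Set.mem_setOf_eq, Finset.mem_filter] at hx hx'
    obtain ⟨-, hx0, hxr⟩ := hx
    obtain ⟨-, hx'0, hx'r⟩ := hx'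
    have hu0 : x' * x⁻¹ ≠ 0 := mul_ne_zero hx'0 (inv_ne_zero hx0)
    have hu1 : (x' * x⁻¹) ^ (nq / d) = 1 := by
      rw [mul_pow, inv_pow]
      simp only [hf] at hfe
      rw [hfe]
      exact mul_inv_cancel₀ (pow_ne_zero _ hx'0)
    obtain ⟨y, hy0, hyd⟩ := aux_field_root hd hu0 hu1
    have hx'eq : x' = x * y ^ d := by
      rw [hyd]; field_simp
    have e1 : h.eval (x * y ^ d) = 0 := hx'eq ▸ hx'r
    have e2 : h.eval (x * 1 ^ d) = 0 := by rw [one_pow, mul_one]; exact hxr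
    rw [heval x y hy0] at e1
    rw [heval x 1 one_ne_zero] at e2
    rw [one_pow, mul_one] at e2
    have : a * (x * y ^ d) = a * x := by linear_combination e1 - e2
    have hax : a * x ≠ 0 := mul_ne_zero ha hx0
    have hyd1 : y ^ d = 1 := by
      have h1 : x * y ^ d = x * 1 := by rw [mul_one]; exact mul_left_cancel₀ ha this
      exact mul_left_cancel₀ hx0 h1
    rw [hx'eq, hyd1, mul_one]
  have hcard : S.card = (S.image f).card := (Finset.card_image_of_injOn hinj).symm
  rw [hcard]
  have hsub : S.image f ⊆ (Polynomial.nthRoots d (1 : F)).toFinset := by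
    intro u hu
    obtain ⟨x, hx, rfl⟩ := Finset.mem_image.1 hu
    simp only [hS, Finset.mem_filter] at hx
    obtain ⟨-, hx0, -⟩ := hx
    rw [Multiset.mem_toFinset, Polynomial.mem_nthRoots hd0, hf]
    rw [← pow_mul, Nat.div_mul_cancel hd]
    exact FiniteField.pow_card_sub_one_eq_one x hx0
  calc (S.image f).card ≤ (Polynomial.nthRoots d (1 : F)).toFinset.card :=
        Finset.card_le_card hsub
    _ ≤ Multiset.card (Polynomial.nthRoots d (1 : F)) := Multiset.toFinset_card_le _
    _ ≤ d := Polynomial.card_nthRoots d 1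
end

section
/- Let q be a prime power, d | q−1 with d ≥ 2, ℓ ≥ 1, and f(x) = x^{(q−1)/d − ℓ} + g(x) ∈ F_q[x] with 1 ≤ deg(g) < (q−1)/d − ℓ and nonzero constant term of f. With the iterated sequences ℓ_i, g_i defined by ℓ₀ = ℓ, g₀ = g, g_{i+1}(x) = −x^{d·deg(g_i)} g_i(1/x)^d, ℓ_{i+1} = (q−1)/d − d(ℓ_i + deg g_i): if d(ℓ_i + deg g_i) < (q−1)/d for all 0 ≤ i ≤ k, then |Z(f)| ≤ min over 0 ≤ i ≤ k+1 of d(ℓ_i + deg g_i). -/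
/-!
If `x ≠ 0` is a root of `X ^ (m - ℓ) + g` with `d * m = q - 1`, raising `x ^ (m - ℓ) = -g x` to
the `d`-th power and using `x ^ (q - 1) = 1` gives `x ^ (d * ℓ) * g(x) ^ d = (-1) ^ d`. Substituting
`x ↦ x⁻¹` turns such a relation `y ^ (d * ℓᵢ) * gᵢ(y) ^ d = c` into the same kind of relation for
`ℓᵢ₊₁, gᵢ₊₁` with constant `(-1) ^ d * c ^ d`, since `gᵢ₊₁(1/y) = -(y⁻ⁿ gᵢ(y)) ^ d`. So after `i` steps
the nonzero roots of `f`, moved by `x ↦ x⁻¹` `i` times, are roots of `X ^ (d * ℓᵢ) * gᵢ ^ d - c`,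
a polynomial with nonzero constant term and degree at most `d * (ℓᵢ + deg gᵢ)`.
-/

open Polynomial

section

variable {F : Type*} [Field F]

theorem Polynomial.eval_reverse_inv_mul_pow (p : F[X]) {y : F} (hy : y ≠ 0) :
    p.reverse.eval y⁻¹ * y ^ p.natDegree = p.eval y := by
  let := invertibleOfNonzero hy
  have h := eval₂_reverse_mul_pow (RingHom.id F) y p
  rwa [invOf_eq_inv] at h

theorem card_le_of_forall_pow_mul_eval_pow_eq {S : Finset F} {p : F[X]}
    {a d : ℕ} {c : F} (ha : 0 < a) (hc : c ≠ 0) (hS : ∀ y ∈ S, y ^ a * p.eval y ^ d = c) :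
    S.card ≤ a + d * p.natDegree := by
  set P := X ^ a * p ^ d - C c
  have hP : P ≠ 0 := fun h => hc <| by
    simpa [P, zero_pow ha.ne'] using congrArg (eval 0) h
  calc S.card ≤ P.natDegree := by
        refine card_le_degree_of_subset_roots fun y hy => ?_
        simp [mem_roots hP, P, hS y hy]
    _ ≤ a + d * p.natDegree := by
        refine (natDegree_sub_C).le.trans (natDegree_mul_le.trans ?_)
        rw [natDegree_X_pow]
        exact add_le_add_right natDegree_pow_le _

theorem pow_mul_eval_pow_eq_neg_one_pow {g : F[X]} {x : F} {d ℓ m : ℕ} (hℓm : ℓ ≤ m)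
    (hx : x ^ (d * m) = 1) (hfx : (X ^ (m - ℓ) + g).eval x = 0) :
    x ^ (d * ℓ) * g.eval x ^ d = (-1) ^ d := by
  have hg : g.eval x = -x ^ (m - ℓ) := by
    simp only [eval_add, eval_pow, eval_X] at hfx
    linear_combination hfx
  rw [hg, neg_pow, mul_left_comm, ← pow_mul, ← pow_add,
    show d * ℓ + (m - ℓ) * d = d * m by rw [mul_comm _ d, ← mul_add, Nat.add_sub_cancel' hℓm],
    hx, mul_one]

theorem inv_pow_mul_eval_neg_reverse_pow_pow {p : F[X]} {y c : F} (hy : y ≠ 0) {d l l' N : ℕ}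
    (hN : y ^ N = 1) (hl' : d * l' + d * d * (l + p.natDegree) = N)
    (h : y ^ (d * l) * p.eval y ^ d = c) :
    y⁻¹ ^ (d * l') * (-(p.reverse ^ d)).eval y⁻¹ ^ d = (-1) ^ d * c ^ d := by
  have hl'N : y⁻¹ ^ (d * l') = y ^ (d * d * (l + p.natDegree)) := by
    rw [inv_pow]
    exact inv_eq_of_mul_eq_one_right (by rw [← pow_add, hl', hN])
  rw [eval_neg, eval_pow, hl'N, ← h, ← p.eval_reverse_inv_mul_pow hy]
  ring

theorem exists_iterate_inv_pow_mul_eval_pow_eq {f : F[X]} {G : ℕ → F[X]} {L : ℕ → ℤ}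
    {d ℓ m k : ℕ} (hpow : ∀ x : F, x ≠ 0 → x ^ (d * m) = 1) (hℓ : 0 < ℓ) (hℓm : ℓ ≤ m)
    (hf : f = X ^ (m - ℓ) + G 0) (hL0 : L 0 = ℓ)
    (hGrec : ∀ i, G (i + 1) = -((G i).reverse ^ d))
    (hLrec : ∀ i, L (i + 1) = m - d * (L i + (G i).natDegree))
    (hk : ∀ i ≤ k, (d : ℤ) * (L i + (G i).natDegree) < m) :
    ∀ i ≤ k + 1, ∃ l : ℕ, (l : ℤ) = L i ∧ 0 < l ∧ ∃ c ≠ (0 : F), ∀ x ≠ 0, f.eval x = 0 →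
      (Inv.inv^[i] x) ^ (d * l) * (G i).eval (Inv.inv^[i] x) ^ d = c := by
  intro i hi
  induction i with
  | zero =>
    refine ⟨ℓ, hL0.symm, hℓ, (-1) ^ d, by simp, fun x hx hfx => ?_⟩
    exact pow_mul_eval_pow_eq_neg_one_pow hℓm (hpow x hx) (hf ▸ hfx)
  | succ i ih =>
    obtain ⟨l, hl, -, c, hc, h⟩ := ih (by omega)
    have hLpos : 0 < L (i + 1) := by linarith [hk i (by omega), hLrec i]
    set l' := (L (i + 1)).toNat
    have hl' : (l' : ℤ) = L (i + 1) := Int.toNat_of_nonneg hLpos.le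
    have hsum : l' + d * (l + (G i).natDegree) = m := by
      have : (l' : ℤ) + d * (l + (G i).natDegree) = m := by rw [hl', hLrec i, hl]; ring
      exact_mod_cast this
    refine ⟨l', hl', by omega, (-1) ^ d * c ^ d, by simp [hc], fun x hx hfx => ?_⟩
    have hy : Inv.inv^[i] x ≠ 0 := Function.Iterate.rec (· ≠ 0) hx (fun _ => inv_ne_zero) i
    rw [Function.iterate_succ_apply', hGrec]
    exact inv_pow_mul_eval_neg_reverse_pow_pow hy (hpow _ hy) (by rw [← hsum]; ring) (h x hx hfx)

end

theorem stmt_17_general {F : Type*} [Field F] [Fintype F] [DecidableEq F]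
    (d ℓ : ℕ) (hd : d ∣ Fintype.card F - 1) (hd2 : 2 ≤ d) (hℓ : 1 ≤ ℓ)
    (g f : F[X])
    (hf : f = X ^ ((Fintype.card F - 1) / d - ℓ) + g)
    (G : ℕ → F[X]) (L : ℕ → ℤ)
    (hG0 : G 0 = g) (hL0 : L 0 = ℓ)
    (hGrec : ∀ i, G (i + 1) = -((G i).reverse ^ d))
    (hLrec : ∀ i, L (i + 1) =
      (((Fintype.card F - 1) / d : ℕ) : ℤ) - d * (L i + (G i).natDegree))
    (k : ℕ)
    (hk : ∀ i ≤ k, (d : ℤ) * (L i + (G i).natDegree)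
      < (((Fintype.card F - 1) / d : ℕ) : ℤ)) :
    ∀ i ≤ k + 1,
      ((Finset.univ.filter (fun x : F => x ≠ 0 ∧ f.eval x = 0)).card : ℤ)
        ≤ d * (L i + (G i).natDegree) := by
  set m := (Fintype.card F - 1) / d
  have hpow (x : F) (hx : x ≠ 0) : x ^ (d * m) = 1 := by
    rw [Nat.mul_div_cancel' hd]
    exact FiniteField.pow_card_sub_one_eq_one x hx
  have hℓm : ℓ ≤ m := by
    have := hk 0 k.zero_le
    rw [hL0] at this
    nlinarith
  intro i hi
  obtain ⟨l, hl, hl0, c, hc, h⟩ := exists_iterate_inv_pow_mul_eval_pow_eq hpow hℓ hℓm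
    (hf.trans (by rw [hG0])) hL0 hGrec hLrec hk i hi
  set Z := Finset.univ.filter (fun x : F => x ≠ 0 ∧ f.eval x = 0)
  have hZ : (Z.image Inv.inv^[i]).card ≤ d * l + d * (G i).natDegree :=
    card_le_of_forall_pow_mul_eval_pow_eq (Nat.mul_pos (by omega) hl0) hc <|
      Finset.forall_mem_image.2 fun x hx => (Finset.mem_filter.1 hx).2.elim (h x)
  rw [Finset.card_image_of_injective _ (inv_injective.iterate i)] at hZ
  rw [← hl]
  exact_mod_cast hZ.trans_eq (mul_add d l _).symm

theorem stmt_17 {F : Type*} [Field F] [Fintype F] [DecidableEq F]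
    (d ℓ : ℕ) (hd : d ∣ Fintype.card F - 1) (hd2 : 2 ≤ d) (hℓ : 1 ≤ ℓ)
    (g f : F[X]) (hg1 : 1 ≤ g.natDegree)
    (hgdeg : g.natDegree < (Fintype.card F - 1) / d - ℓ)
    (hf : f = X ^ ((Fintype.card F - 1) / d - ℓ) + g)
    (hf0 : f.coeff 0 ≠ 0)
    (G : ℕ → F[X]) (L : ℕ → ℤ)
    (hG0 : G 0 = g) (hL0 : L 0 = ℓ)
    (hGrec : ∀ i, G (i + 1) = -((G i).reverse ^ d))
    (hLrec : ∀ i, L (i + 1) =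
      (((Fintype.card F - 1) / d : ℕ) : ℤ) - d * (L i + (G i).natDegree))
    (k : ℕ)
    (hk : ∀ i ≤ k, (d : ℤ) * (L i + (G i).natDegree)
      < (((Fintype.card F - 1) / d : ℕ) : ℤ)) :
    ∀ i ≤ k + 1,
      ((Finset.univ.filter (fun x : F => x ≠ 0 ∧ f.eval x = 0)).card : ℤ)
        ≤ d * (L i + (G i).natDegree) :=
  stmt_17_general d ℓ hd hd2 hℓ g f hf G L hG0 hL0 hGrec hLrec k hk
end

section
/- Let q be a prime power, d | q−1 with d ≥ 2, and f(x) = x^{(q−1)/d − ℓ} + g(x) ∈ F_q[x] with ℓ ≥ 1, 1 ≤ deg(g) < (q−1)/d − ℓ, and g having nonzero constant term. If ℓ > (q−1)/(d(d+1)) and ℓ + deg(g) < (q−1)(1 + 1/d)/(d(d+1)), then the number of distinct roots of f in F_q^* satisfies |Z(f)| ≤ q − 1 − d²ℓ. -/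
open Polynomial

theorem stmt_19 {F : Type*} [Field F] [Fintype F] [DecidableEq F]
    (d ℓ : ℕ) (hd2 : 2 ≤ d) (hd : d ∣ Fintype.card F - 1) (hℓ : 1 ≤ ℓ)
    (g f : F[X]) (hg1 : 1 ≤ g.natDegree)
    (hgdeg : g.natDegree < (Fintype.card F - 1) / d - ℓ)
    (hf : f = X ^ ((Fintype.card F - 1) / d - ℓ) + g)
    (hf0 : f.coeff 0 ≠ 0)
    (hℓbig : ((Fintype.card F : ℚ) - 1) / (d * (d + 1)) < (ℓ : ℚ))
    (hsum : ((ℓ : ℚ) + g.natDegree)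
      < ((Fintype.card F : ℚ) - 1) * (1 + 1 / d) / (d * (d + 1))) :
    ((Finset.univ.filter (fun x : F => x ≠ 0 ∧ f.eval x = 0)).card : ℤ)
      ≤ (Fintype.card F : ℤ) - 1 - d ^ 2 * ℓ := by
  set q := Fintype.card F with hq
  have hq2 : 2 ≤ q := Fintype.one_lt_card
  obtain ⟨m, hmd⟩ : ∃ m, q - 1 = d * m := hd
  have hmdiv : (q - 1) / d = m := by rw [hmd]; exact Nat.mul_div_cancel_left _ (by omega)
  rw [hmdiv] at hgdeg hf
  -- key numeric inequality: d^2 * (ℓ + deg g) < q - 1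
  have hkey : d ^ 2 * (ℓ + g.natDegree) < q - 1 := by
    have hdq : (0:ℚ) < (d:ℚ) := by exact_mod_cast (by omega : 0 < d)
    have hden : (0:ℚ) < (d:ℚ) * ((d:ℚ) + 1) := by positivity
    rw [lt_div_iff₀ hden] at hsum
    have hinv : (d:ℚ) * (1 / d) = 1 := by field_simp
    have hQ : ((d:ℚ))^2 * ((ℓ:ℚ) + g.natDegree) < (q:ℚ) - 1 := by
      nlinarith [hsum, hdq, hinv]
    have hq1 : (1:ℕ) ≤ q := by omega
    have : ((d ^ 2 * (ℓ + g.natDegree) : ℕ) : ℚ) < ((q - 1 : ℕ) : ℚ) := by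
      push_cast [Nat.cast_sub hq1]
      convert hQ using 2 <;> ring
    exact_mod_cast this
  have hℓm : ℓ < m := tsub_pos_iff_lt.mp (lt_of_le_of_lt (Nat.zero_le _) hgdeg)
  have hkey' : d ^ 2 * ℓ + d ^ 2 * g.natDegree < q - 1 := by
    rw [← Nat.mul_add]; exact hkey
  set N := q - 1 - d ^ 2 * ℓ with hN
  have hdeg : d ^ 2 * g.natDegree < N := by omega
  -- the auxiliary polynomial
  set R : F[X] := X ^ N - (-g) ^ (d ^ 2) with hR
  have hgne : g ≠ 0 := fun h => by simp [h] at hg1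
  have hRdegP : ((-g) ^ (d ^ 2)).natDegree = d ^ 2 * g.natDegree := by
    rw [natDegree_pow, natDegree_neg]
  have hRne : R ≠ 0 := by
    intro h
    have hc : R.coeff N = 1 := by
      rw [hR, coeff_sub, coeff_X_pow, if_pos rfl,
        coeff_eq_zero_of_natDegree_lt (by rw [hRdegP]; exact hdeg), sub_zero]
    rw [h] at hc
    simp at hc
  have hRdeg : R.natDegree ≤ N := by
    rw [hR]
    refine le_trans (natDegree_sub_le _ _) ?_
    simp [natDegree_X_pow, hRdegP]
    omega
  -- every element of the filter is a root of R
  have hsub : (Finset.univ.filter (fun x : F => x ≠ 0 ∧ f.eval x = 0))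
      ⊆ R.roots.toFinset := by
    intro x hx
    simp only [Finset.mem_filter, Finset.mem_univ, true_and] at hx
    obtain ⟨hx0, hxf⟩ := hx
    rw [Multiset.mem_toFinset, mem_roots hRne]
    have hroot : x ^ (m - ℓ) = -g.eval x := by
      rw [hf] at hxf
      simp only [eval_add, eval_pow, eval_X] at hxf
      exact eq_neg_of_add_eq_zero_left hxf
    have hx1 : x ^ (q - 1) = 1 := FiniteField.pow_card_sub_one_eq_one x hx0
    have h2 : x ^ (d ^ 2 * (m - ℓ)) = (-g.eval x) ^ (d ^ 2) := by
      rw [mul_comm, pow_mul, hroot]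
    have hmm : d ^ 2 * m = d * (q - 1) := by
      rw [hmd]; ring
    have h3 : x ^ (d ^ 2 * m) = 1 := by
      rw [hmm, mul_comm, pow_mul, hx1, one_pow]
    have hle : d ^ 2 * ℓ ≤ d ^ 2 * m := Nat.mul_le_mul_left _ (le_of_lt hℓm)
    have h4 : x ^ (d ^ 2 * ℓ) * (-g.eval x) ^ (d ^ 2) = 1 := by
      rw [← h2, ← pow_add]
      rw [show d ^ 2 * ℓ + d ^ 2 * (m - ℓ) = d ^ 2 * m by
        rw [← Nat.mul_add, Nat.add_sub_cancel' hℓm.le]]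
      exact h3
    have h5 : x ^ N = (-g.eval x) ^ (d ^ 2) := by
      have hNs : N + d ^ 2 * ℓ = q - 1 := by omega
      calc x ^ N = x ^ N * (x ^ (d ^ 2 * ℓ) * (-g.eval x) ^ (d ^ 2)) := by
            rw [h4, mul_one]
        _ = (x ^ N * x ^ (d ^ 2 * ℓ)) * (-g.eval x) ^ (d ^ 2) := by ring
        _ = (-g.eval x) ^ (d ^ 2) := by
            rw [← pow_add, hNs, hx1, one_mul]
    rw [hR]
    simp [eval_pow, eval_neg, h5]
  have hcard : (Finset.univ.filter (fun x : F => x ≠ 0 ∧ f.eval x = 0)).card ≤ N := by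
    calc _ ≤ R.roots.toFinset.card := Finset.card_le_card hsub
      _ ≤ Multiset.card R.roots := Multiset.toFinset_card_le _
      _ ≤ R.natDegree := R.card_roots'
      _ ≤ N := hRdeg
  have hNle : d ^ 2 * ℓ ≤ q - 1 := by omega
  have : ((Finset.univ.filter (fun x : F => x ≠ 0 ∧ f.eval x = 0)).card : ℤ) ≤ (N : ℤ) := by
    exact_mod_cast hcard
  refine le_trans this ?_
  rw [hN]
  push_cast [Nat.cast_sub hNle, Nat.cast_sub (by omega : 1 ≤ q)]
  omega
end
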